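/- arXiv:0901.1283 — 4 statements merged into one kernel-verified Lean document; each statement's English description precedes it below -/
import Mathlib

section
/- Under hypotheses (a1)–(a5), every solution x of the initial value problem for the distributed-delay equation satisfies x(t) > 0 for all t ≥ 0. -/
/-!
Suppose `x` vanishes somewhere on `[0, ∞)` and let `t₀ > 0` be its first zero. Up to `t₀` the
history of `x` is nonnegative, so the delayed term `∫ f (x s) dμ_u` is nonnegative and the
equation gives `x' ≥ -r x` on `[0, t₀]`. Choose `t₁ < t₀` with `∫_{t₁}^{t₀} r ≤ 1/2` and let
`M = x c > 0` be the maximum of `x` on `[t₁, t₀]`. Then `x t₀ - x c ≥ -M ∫_c^{t₀} r ≥ -M/2`,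
so `x t₀ ≥ M/2 > 0`, a contradiction.
-/

open MeasureTheory Filter Set

theorem Continuous.exists_first_zero {x : ℝ → ℝ} (hx : Continuous x) (h0 : 0 < x 0) {T : ℝ}
    (hT : 0 ≤ T) (hxT : x T ≤ 0) :
    ∃ t₀, 0 < t₀ ∧ x t₀ = 0 ∧ ∀ s ∈ Ico 0 t₀, 0 < x s := by
  set S := Ici 0 ∩ x ⁻¹' Iic 0
  have hbdd : BddBelow S := ⟨0, fun _ hs => hs.1⟩
  have hmem : sInf S ∈ S :=
    (isClosed_Ici.inter (isClosed_Iic.preimage hx)).csInf_mem ⟨T, hT, hxT⟩ hbdd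
  have hpos : ∀ s ∈ Ico 0 (sInf S), 0 < x s := fun s hs =>
    not_le.1 fun hxs => notMem_of_lt_csInf hs.2 hbdd ⟨hs.1, hxs⟩
  have ht₀ : 0 < sInf S := lt_of_le_of_ne hmem.1 fun h => (h ▸ hmem.2 : x 0 ≤ 0).not_gt h0
  refine ⟨sInf S, ht₀, le_antisymm hmem.2 ?_, hpos⟩
  refine ge_of_tendsto ((hx.tendsto _).mono_left (nhdsWithin_le_nhds (s := Iio (sInf S)))) ?_
  filter_upwards [Ioo_mem_nhdsLT ht₀] with s hs using (hpos s ⟨hs.1.le, hs.2⟩).le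

theorem exists_mem_Ico_integral_lt {r : ℝ → ℝ} {a b ε : ℝ} (hab : a < b)
    (hr : IntervalIntegrable r volume a b) (hε : 0 < ε) :
    ∃ t ∈ Ico a b, ∫ u in t..b, r u < ε := by
  have hcont : ContinuousWithinAt (fun t => ∫ u in t..b, r u) (Ioo a b) b :=
    (intervalIntegral.continuousOn_primitive_interval_left
      ((intervalIntegrable_iff' enorm_ne_top).1 hr) b right_mem_uIcc).mono
      (Ioo_subset_Icc_self.trans Icc_subset_uIcc)
  rw [ContinuousWithinAt, nhdsWithin_Ioo_eq_nhdsLT hab, intervalIntegral.integral_same] at hcont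
  obtain ⟨t, ht, hlt⟩ := ((hcont.eventually (gt_mem_nhds hε)).and (Ioo_mem_nhdsLT hab)).exists
  exact ⟨t, ⟨hlt.1.le, hlt.2⟩, ht⟩

theorem pos_right_of_eq_integral_of_neg_mul_le {x G r : ℝ → ℝ} {a b : ℝ} (hab : a < b)
    (hx : ContinuousOn x (Icc a b)) (hG : IntervalIntegrable G volume a b)
    (hr : IntervalIntegrable r volume a b) (hr_nonneg : ∀ u ∈ Icc a b, 0 ≤ r u)
    (hxG : ∀ t ∈ Icc a b, x t = x a + ∫ u in a..t, G u)
    (hGr : ∀ u ∈ Icc a b, -(r u * x u) ≤ G u) (hpos : ∀ t ∈ Ico a b, 0 < x t) :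
    0 < x b := by
  by_contra! hxb
  obtain ⟨t₁, ⟨hat₁, ht₁b⟩, hsmall⟩ := exists_mem_Ico_integral_lt hab hr one_half_pos
  obtain ⟨c, hc, hmax⟩ := isCompact_Icc.exists_isMaxOn (nonempty_Icc.2 ht₁b.le)
    (hx.mono (Icc_subset_Icc_left hat₁))
  have hM : 0 < x c := (hpos t₁ ⟨hat₁, ht₁b⟩).trans_le (hmax ⟨le_rfl, ht₁b.le⟩)
  have hac : a ≤ c := hat₁.trans hc.1
  have hc_mem : c ∈ uIcc a b := mem_uIcc_of_le hac hc.2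
  have hcb : uIcc c b ⊆ uIcc a b := uIcc_subset_uIcc hc_mem right_mem_uIcc
  have hGcb : IntervalIntegrable G volume c b := hG.mono_set hcb
  have hrcb : IntervalIntegrable r volume c b := hr.mono_set hcb
  have hdiff : x b - x c = ∫ u in c..b, G u := by
    rw [hxG b ⟨hab.le, le_rfl⟩, hxG c ⟨hac, hc.2⟩, ← intervalIntegral.integral_interval_sub_left hG
      (hG.mono_set (uIcc_subset_uIcc left_mem_uIcc hc_mem))]
    ring
  have hlower : -(x c * ∫ u in c..b, r u) ≤ ∫ u in c..b, G u := by
    rw [← intervalIntegral.integral_const_mul, ← intervalIntegral.integral_neg]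
    refine intervalIntegral.integral_mono_on hc.2 (hrcb.const_mul _).neg hGcb fun u hu => ?_
    have hu' : u ∈ Icc a b := ⟨hac.trans hu.1, hu.2⟩
    have := mul_le_mul_of_nonneg_left (hmax ⟨hc.1.trans hu.1, hu.2⟩) (hr_nonneg u hu')
    linarith [hGr u hu']
  have hrc : ∫ u in c..b, r u ≤ 1 / 2 := by
    refine (intervalIntegral.integral_mono_interval hc.1 hc.2 le_rfl ?_
      (hr.mono_set (uIcc_subset_uIcc (mem_uIcc_of_le hat₁ ht₁b.le) right_mem_uIcc))).trans hsmall.le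
    exact (ae_restrict_iff' measurableSet_Ioc).2 <| Eventually.of_forall fun u hu =>
      hr_nonneg u ⟨hat₁.trans hu.1.le, hu.2⟩
  nlinarith [mul_le_mul_of_nonneg_left hrc hM.le]

theorem Continuous.exists_abs_comp_le_on_Iic {f x : ℝ → ℝ} (hf : Continuous f)
    (hx : Continuous x) {a : ℝ} (hbdd : ∃ C, ∀ s ≤ a, |x s| ≤ C) (b : ℝ) :
    ∃ F, ∀ s ≤ b, |f (x s)| ≤ F := by
  obtain ⟨C, hC⟩ := hbdd
  obtain ⟨D, hD⟩ :=
    isCompact_Icc.exists_bound_of_continuousOn (s := Icc a b) hx.continuousOn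
  have hB : ∀ s ≤ b, |x s| ≤ max C D := fun s hs => by
    rcases le_or_gt s a with h | h
    · exact (hC s h).trans (le_max_left _ _)
    · exact (hD s ⟨h.le, hs⟩).trans (le_max_right _ _)
  obtain ⟨F, hF⟩ := isCompact_Icc.exists_bound_of_continuousOn
    (s := Icc (-max C D) (max C D)) hf.continuousOn
  exact ⟨F, fun s hs => hF _ (abs_le.1 (hB s hs))⟩

theorem intervalIntegrable_mul_integral_sub {r g x : ℝ → ℝ} {μ : ℝ → Measure ℝ} {a b F : ℝ}
    (hab : a ≤ b) (hr : IntervalIntegrable r volume a b)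
    (hμ : ∀ u ∈ Icc a b, IsProbabilityMeasure (μ u))
    (hμg : Measurable fun u => ∫ s, g s ∂(μ u)) (hg : ∀ s, |g s| ≤ F) (hx : Continuous x) :
    IntervalIntegrable (fun u => r u * (∫ s, g s ∂(μ u) - x u)) volume a b := by
  obtain ⟨B, hB⟩ :=
    isCompact_Icc.exists_bound_of_continuousOn (s := Icc a b) hx.continuousOn
  have hbound : ∀ u ∈ Icc a b, ‖∫ s, g s ∂(μ u) - x u‖ ≤ F + B := fun u hu => by
    have := hμ u hu
    have hI : ‖∫ s, g s ∂(μ u)‖ ≤ F := by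
      simpa using
        norm_integral_le_of_norm_le_const (μ := μ u) (f := g) (Eventually.of_forall hg)
    exact (norm_sub_le _ _).trans (add_le_add hI (hB u hu))
  rw [intervalIntegrable_iff_integrableOn_Icc_of_le hab enorm_ne_top] at hr ⊢
  exact hr.mul_bdd (hμg.sub hx.measurable).aestronglyMeasurable.restrict
    ((ae_restrict_iff' measurableSet_Icc).2 (Eventually.of_forall hbound))

theorem distributed_delay_positivity_general
    (f : ℝ → ℝ) (h r : ℝ → ℝ) (μ : ℝ → Measure ℝ) (φ : ℝ → ℝ)
    (hf_cont : Continuous f)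
    (hf_nonneg : ∀ y : ℝ, 0 ≤ y → 0 ≤ f y)
    (hr_meas : Measurable r)
    (hr_nonneg : ∀ t : ℝ, 0 ≤ r t)
    (hr_bdd : ∃ C : ℝ, ∀ᵐ t ∂volume, r t ≤ C)
    (hμ_prob : ∀ t : ℝ, 0 ≤ t → IsProbabilityMeasure (μ t))
    (hμ_supp : ∀ t : ℝ, 0 ≤ t → μ t (Icc (h t) t)ᶜ = 0)
    (hμ_meas : ∀ g : ℝ → ℝ, Measurable g → (∃ C : ℝ, ∀ y : ℝ, |g y| ≤ C) →
      Measurable (fun t => ∫ s, g s ∂(μ t)))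
    (hφ_bdd : ∃ C : ℝ, ∀ t : ℝ, t ≤ 0 → |φ t| ≤ C)
    (hφ_nonneg : ∀ t : ℝ, t ≤ 0 → 0 ≤ φ t)
    (hφ_pos : 0 < φ 0)
    (x : ℝ → ℝ)
    (hx_cont : Continuous x)
    (hx_init : ∀ t : ℝ, t ≤ 0 → x t = φ t)
    (hx_sol : ∀ t : ℝ, 0 ≤ t →
      x t = φ 0 + ∫ u in (0:ℝ)..t, r u * ((∫ s, f (x s) ∂(μ u)) - x u))
    :
    ∀ t : ℝ, 0 ≤ t → 0 < x t := by
  intro T hT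
  by_contra! hxT
  have hx0 : x 0 = φ 0 := hx_init 0 le_rfl
  obtain ⟨t₀, ht₀, hxt₀, hpos⟩ := hx_cont.exists_first_zero (hx0 ▸ hφ_pos) hT hxT
  have hx_nonneg : ∀ s ≤ t₀, 0 ≤ x s := fun s hs => by
    rcases le_or_gt s 0 with hs₀ | hs₀
    · exact hx_init s hs₀ ▸ hφ_nonneg s hs₀
    · rcases hs.lt_or_eq with hs' | rfl
      exacts [(hpos s ⟨hs₀.le, hs'⟩).le, hxt₀.ge]
  obtain ⟨F, hF⟩ := hf_cont.exists_abs_comp_le_on_Iic hx_cont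
    (hφ_bdd.imp fun C hC s hs => hx_init s hs ▸ hC s hs) t₀
  -- Freezing the history at `t₀` changes nothing on `[0, t₀]` and makes the integrand bounded.
  set g : ℝ → ℝ := fun s => f (x (min s t₀))
  have hg_bdd : ∀ s, |g s| ≤ F := fun s => hF _ (min_le_right _ _)
  have hg_eq : ∀ u ∈ Icc 0 t₀, ∫ s, f (x s) ∂(μ u) = ∫ s, g s ∂(μ u) := fun u hu =>
    have hsupp : ∀ᵐ s ∂μ u, s ∈ Icc (h u) u := mem_ae_iff.2 (hμ_supp u hu.1)
    integral_congr_ae <| hsupp.mono fun s hs => by simp only [g, min_eq_left (hs.2.trans hu.2)]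
  obtain ⟨C, hC⟩ := hr_bdd
  have hr_int : IntervalIntegrable r volume 0 t₀ := IntegrableOn.intervalIntegrable <|
    Measure.integrableOn_of_bounded measure_Icc_lt_top.ne hr_meas.aestronglyMeasurable
      (ae_restrict_of_ae <| hC.mono fun u hu => by
        rwa [Real.norm_eq_abs, abs_of_nonneg (hr_nonneg u)])
  have hG_int := intervalIntegrable_mul_integral_sub ht₀.le hr_int (fun u hu => hμ_prob u hu.1)
    (hμ_meas g (hf_cont.comp (hx_cont.comp (continuous_id.min continuous_const))).measurable
      ⟨F, hg_bdd⟩) hg_bdd hx_cont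
  refine (pos_right_of_eq_integral_of_neg_mul_le ht₀ hx_cont.continuousOn hG_int hr_int
    (fun u _ => hr_nonneg u) (fun t ht => ?_) (fun u hu => ?_) hpos).ne' hxt₀
  · rw [hx_sol t ht.1, hx0]
    refine congrArg _ (intervalIntegral.integral_congr fun u hu => ?_)
    rw [uIcc_of_le ht.1] at hu
    simp only [hg_eq u ⟨hu.1, hu.2.trans ht.2⟩]
  · have hI : 0 ≤ ∫ s, g s ∂(μ u) :=
      integral_nonneg fun s => hf_nonneg _ (hx_nonneg _ (min_le_right _ _))
    rw [mul_sub]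
    linarith [mul_nonneg (hr_nonneg u) hI]

theorem distributed_delay_positivity
    (f : ℝ → ℝ) (L K : ℝ) (hL : 0 ≤ L) (hK : 0 < K)
    (h r : ℝ → ℝ) (μ : ℝ → Measure ℝ) (φ : ℝ → ℝ)
    (hf_cont : Continuous f)
    (hf_nonneg : ∀ y : ℝ, 0 ≤ y → 0 ≤ f y)
    (hf_lip : ∀ u v : ℝ, 0 ≤ u → 0 ≤ v → |f u - f v| ≤ L * |u - v|)
    (hf_zero : f 0 = 0)
    (hf_below : ∀ y : ℝ, 0 < y → y < K → y < f y)
    (hf_above : ∀ y : ℝ, K < y → 0 < f y ∧ f y < y)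
    (hh_meas : Measurable h)
    (hh_le : ∀ t : ℝ, 0 ≤ t → h t ≤ t)
    (hh_tend : Tendsto h atTop atTop)
    (hr_meas : Measurable r)
    (hr_nonneg : ∀ t : ℝ, 0 ≤ r t)
    (hr_bdd : ∃ C : ℝ, ∀ᵐ t ∂volume, r t ≤ C)
    (hr_div : ¬ IntegrableOn r (Ici (0 : ℝ)))
    (hμ_prob : ∀ t : ℝ, 0 ≤ t → IsProbabilityMeasure (μ t))
    (hμ_supp : ∀ t : ℝ, 0 ≤ t → μ t (Icc (h t) t)ᶜ = 0)
    (hμ_meas : ∀ g : ℝ → ℝ, Measurable g → (∃ C : ℝ, ∀ y : ℝ, |g y| ≤ C) →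
      Measurable (fun t => ∫ s, g s ∂(μ t)))
    (hφ_cont : ContinuousOn φ (Iic (0 : ℝ)))
    (hφ_bdd : ∃ C : ℝ, ∀ t : ℝ, t ≤ 0 → |φ t| ≤ C)
    (hφ_nonneg : ∀ t : ℝ, t ≤ 0 → 0 ≤ φ t)
    (hφ_pos : 0 < φ 0)
    (x : ℝ → ℝ)
    (hx_cont : Continuous x)
    (hx_init : ∀ t : ℝ, t ≤ 0 → x t = φ t)
    (hx_sol : ∀ t : ℝ, 0 ≤ t →
      x t = φ 0 + ∫ u in (0:ℝ)..t, r u * ((∫ s, f (x s) ∂(μ u)) - x u))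
    :
    ∀ t : ℝ, 0 ≤ t → 0 < x t :=
  distributed_delay_positivity_general f h r μ φ hf_cont hf_nonneg hr_meas hr_nonneg hr_bdd hμ_prob
    hμ_supp hμ_meas hφ_bdd hφ_nonneg hφ_pos x hx_cont hx_init hx_sol
end

section
/- Under hypotheses (a1)–(a5), every solution x of the initial value problem for the distributed-delay equation is permanent: there exist real numbers A and B with 0 < A ≤ B such that A ≤ x(t) ≤ B for all t ≥ 0. -/
open MeasureTheory Filter Set

/-!
Everything rests on a comparison principle. Let `y = x - m`. While `x ≥ m` and the delayed
feedback `f ∘ x` stays `≥ m`, the equation gives `y t ≤ y b + C ∫_t^b y`, with `C` a bound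
for `r`. Then `y` cannot vanish at a first time `τ`: the maximum `M` of `y` on `[τ - δ, τ]`
would satisfy `M ≤ C δ M`. The principle with `m = 0` gives positivity. Its mirror image,
for levels above `max (sup f on [0, K]) (sup φ)`, gives the upper bound `B`. Once the delay
windows `[h t, t]` lie in `[0, ∞)`, `f ≥ min id (min f on [K, B])` on `(0, B]` gives the
lower bound.
-/

theorem le_apply_of_forall_lt_apply {f : ℝ → ℝ} {K : ℝ} (hf : Continuous f) (hK : 0 < K)
    (hf_below : ∀ y, 0 < y → y < K → y < f y) {y : ℝ} (hy : 0 ≤ y) (hyK : y ≤ K) :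
    y ≤ f y := by
  have hsub : Icc 0 K ⊆ {y | y ≤ f y} := by
    rw [← closure_Ioo hK.ne]
    exact (isClosed_le continuous_id hf).closure_subset_iff.2 fun y hy => (hf_below y hy.1 hy.2).le
  exact hsub ⟨hy, hyK⟩

theorem exists_pos_forall_min_le_apply {f : ℝ → ℝ} {K : ℝ} (hf : Continuous f) (hK : 0 < K)
    (hf_below : ∀ y, 0 < y → y < K → y < f y) (hf_above : ∀ y, K < y → 0 < f y) (B : ℝ) :
    ∃ c > 0, ∀ y, 0 ≤ y → y ≤ B → min y c ≤ f y := by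
  obtain ⟨z, hz, hz_min⟩ :=
    isCompact_Icc.exists_isMinOn (nonempty_Icc.2 (le_max_left K B)) hf.continuousOn
  have hfz : 0 < f z := by
    rcases hz.1.eq_or_lt with hKz | hKz
    · rw [← hKz]
      exact hK.trans_le (le_apply_of_forall_lt_apply hf hK hf_below hK.le le_rfl)
    · exact hf_above z hKz
  refine ⟨f z, hfz, fun y hy hyB => ?_⟩
  rcases le_or_gt y K with hyK | hKy
  · exact (min_le_left _ _).trans (le_apply_of_forall_lt_apply hf hK hf_below hy hyK)
  · exact (min_le_right _ _).trans (hz_min ⟨hKy.le, le_max_of_le_right hyB⟩)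

theorem exists_forall_apply_le_max {f : ℝ → ℝ} {K : ℝ} (hf : Continuous f)
    (hf_above : ∀ y, K < y → f y < y) : ∃ M, ∀ y, 0 ≤ y → f y ≤ max M y := by
  obtain ⟨M, hM⟩ := isCompact_Icc.exists_bound_of_continuousOn (hf.continuousOn (s := Icc 0 K))
  refine ⟨M, fun y hy => ?_⟩
  rcases le_or_gt y K with hyK | hKy
  · exact le_max_of_le_left ((le_abs_self _).trans (hM y ⟨hy, hyK⟩))
  · exact le_max_of_le_right (hf_above y hKy).le

theorem nonpos_of_le_mul_integral {y : ℝ → ℝ} {C c τ : ℝ} (hy : ContinuousOn y (Icc c τ))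
    (hcτ : c ≤ τ) (hy0 : ∀ t ∈ Icc c τ, 0 ≤ y t) (hC : |C| * (τ - c) < 1)
    (hle : ∀ t ∈ Icc c τ, y t ≤ C * ∫ u in t..τ, y u) : ∀ t ∈ Icc c τ, y t ≤ 0 := by
  obtain ⟨t₀, ht₀, hmax⟩ := isCompact_Icc.exists_isMaxOn (nonempty_Icc.2 hcτ) hy
  have hsub : Icc t₀ τ ⊆ Icc c τ := Icc_subset_Icc_left ht₀.1
  have hint_le : ∫ u in t₀..τ, y u ≤ (τ - c) * y t₀ := calc
    ∫ u in t₀..τ, y u ≤ ∫ _ in t₀..τ, y t₀ :=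
      intervalIntegral.integral_mono_on ht₀.2 ((hy.mono hsub).intervalIntegrable_of_Icc ht₀.2)
        intervalIntegrable_const fun u hu => hmax (hsub hu)
    _ = (τ - t₀) * y t₀ := by simp
    _ ≤ (τ - c) * y t₀ := by gcongr; exacts [hy0 _ ht₀, ht₀.1]
  have hint_nonneg : 0 ≤ ∫ u in t₀..τ, y u :=
    intervalIntegral.integral_nonneg ht₀.2 fun u hu => hy0 u (hsub hu)
  have hyt₀ : y t₀ ≤ |C| * (τ - c) * y t₀ := calc
    y t₀ ≤ C * ∫ u in t₀..τ, y u := hle t₀ ht₀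
    _ ≤ |C| * ∫ u in t₀..τ, y u := mul_le_mul_of_nonneg_right (le_abs_self C) hint_nonneg
    _ ≤ |C| * ((τ - c) * y t₀) := mul_le_mul_of_nonneg_left hint_le (abs_nonneg C)
    _ = |C| * (τ - c) * y t₀ := by ring
  have : y t₀ ≤ 0 := by nlinarith [hy0 t₀ ht₀]
  exact fun t ht => (hmax ht).trans this

theorem pos_of_le_add_mul_integral {y : ℝ → ℝ} {C a : ℝ} (hy : Continuous y) (hya : 0 < y a)
    (hkey : ∀ b, (∀ t ∈ Icc a b, 0 ≤ y t) → ∀ t ∈ Icc a b, y t ≤ y b + C * ∫ u in t..b, y u) :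
    ∀ t, a ≤ t → 0 < y t := by
  by_contra! ⟨b, hab, hyb⟩
  obtain ⟨τ, ⟨hτ, hyτ : y τ ≤ 0⟩, hτ_least⟩ :=
    (isCompact_Icc.inter_right (isClosed_le hy continuous_const)).exists_isLeast
      ⟨b, ⟨hab, le_rfl⟩, hyb⟩
  have hpos : ∀ t ∈ Ico a τ, 0 < y t := fun t ht => by
    by_contra! hyt
    exact (hτ_least ⟨⟨ht.1, ht.2.le.trans hτ.2⟩, hyt⟩).not_gt ht.2
  have haτ : a < τ := hτ.1.lt_of_ne (by rintro rfl; exact hya.not_ge hyτ)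
  have hnonneg : ∀ t ∈ Icc a τ, 0 ≤ y t := by
    rw [← closure_Ico haτ.ne]
    exact (isClosed_le continuous_const hy).closure_subset_iff.2 fun t ht => (hpos t ht).le
  obtain ⟨δ, hδ, hCδ⟩ := exists_pos_mul_lt one_pos |C|
  set c := max a (τ - δ)
  have hc : c ∈ Ico a τ := ⟨le_max_left _ _, max_lt haτ (by linarith)⟩
  have hyc := nonpos_of_le_mul_integral (C := C) hy.continuousOn hc.2.le
    (fun t ht => hnonneg t ⟨hc.1.trans ht.1, ht.2⟩) ?_ ?_ c ⟨le_rfl, hc.2.le⟩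
  · exact (hpos c hc).not_ge hyc
  · calc |C| * (τ - c) ≤ |C| * δ := by gcongr; linarith [le_max_right a (τ - δ)]
      _ < 1 := hCδ
  · intro t ht
    linarith [hkey τ hnonneg t ⟨hc.1.trans ht.1, ht.2⟩]

theorem sub_le_add_mul_integral_of_le {r x F : ℝ → ℝ} {C m t b : ℝ} (hr0 : ∀ u, 0 ≤ r u)
    (hrC : ∀ᵐ u, r u ≤ C) (hx : Continuous x) (htb : t ≤ b)
    (hint : IntervalIntegrable (fun u => r u * (F u - x u)) volume t b)
    (hinc : x b - x t = ∫ u in t..b, r u * (F u - x u))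
    (hF : ∀ u ∈ Icc t b, m ≤ F u) (hxm : ∀ u ∈ Icc t b, m ≤ x u) :
    x t - m ≤ x b - m + C * ∫ u in t..b, (x u - m) := by
  have : -(C * ∫ u in t..b, (x u - m)) ≤ ∫ u in t..b, r u * (F u - x u) := by
    rw [← intervalIntegral.integral_const_mul, ← intervalIntegral.integral_neg]
    refine intervalIntegral.integral_mono_ae_restrict htb
      ((by fun_prop : Continuous fun u => -(C * (x u - m))).intervalIntegrable t b) hint ?_
    filter_upwards [ae_restrict_of_ae hrC, ae_restrict_mem measurableSet_Icc] with u hrCu hu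
    nlinarith [hxm u hu, hF u hu, hr0 u]
  linarith

theorem forall_lt_of_le_forcing {r x F : ℝ → ℝ} {C x₀ a m : ℝ} (hr0 : ∀ u, 0 ≤ r u)
    (hrC : ∀ᵐ u, r u ≤ C) (hx : Continuous x)
    (hint : ∀ T, 0 ≤ T → IntervalIntegrable (fun u => r u * (F u - x u)) volume 0 T)
    (hsol : ∀ t, 0 ≤ t → x t = x₀ + ∫ u in 0..t, r u * (F u - x u))
    (ha : 0 ≤ a) (hxa : m < x a)
    (hF : ∀ b, (∀ t ∈ Icc a b, m ≤ x t) → ∀ u ∈ Icc a b, m ≤ F u) :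
    ∀ t, a ≤ t → m < x t := by
  refine fun t ht => sub_pos.1 (pos_of_le_add_mul_integral (y := fun t => x t - m) (C := C)
    (hx.sub continuous_const) (sub_pos.2 hxa) (fun b hb s hs => ?_) t ht)
  have hxm : ∀ u ∈ Icc a b, m ≤ x u := fun u hu => sub_nonneg.1 (hb u hu)
  have hs0 : 0 ≤ s := ha.trans hs.1
  have hb0 : 0 ≤ b := hs0.trans hs.2
  have hsub : Icc s b ⊆ Icc a b := Icc_subset_Icc_left hs.1
  refine sub_le_add_mul_integral_of_le hr0 hrC hx hs.2 ((hint s hs0).symm.trans (hint b hb0))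
    ?_ (fun u hu => hF b hxm u (hsub hu)) (fun u hu => hxm u (hsub hu))
  rw [hsol b hb0, hsol s hs0,
    ← intervalIntegral.integral_interval_sub_left (hint b hb0) (hint s hs0)]
  ring

theorem forall_lt_of_forcing_le {r x F : ℝ → ℝ} {C x₀ a M : ℝ} (hr0 : ∀ u, 0 ≤ r u)
    (hrC : ∀ᵐ u, r u ≤ C) (hx : Continuous x)
    (hint : ∀ T, 0 ≤ T → IntervalIntegrable (fun u => r u * (F u - x u)) volume 0 T)
    (hsol : ∀ t, 0 ≤ t → x t = x₀ + ∫ u in 0..t, r u * (F u - x u))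
    (ha : 0 ≤ a) (hxa : x a < M)
    (hF : ∀ b, (∀ t ∈ Icc a b, x t ≤ M) → ∀ u ∈ Icc a b, F u ≤ M) :
    ∀ t, a ≤ t → x t < M := by
  have hneg : (fun u => r u * ((-F) u - (-x) u)) = fun u => -(r u * (F u - x u)) := by
    ext u; simp only [Pi.neg_apply]; ring
  have := forall_lt_of_le_forcing (x := -x) (F := -F) (x₀ := -x₀) (m := -M) hr0 hrC hx.neg
    (fun T hT => hneg ▸ (hint T hT).neg)
    (fun t ht => by rw [hneg, intervalIntegral.integral_neg, Pi.neg_apply, hsol t ht]; ring)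
    ha (neg_lt_neg hxa)
    (fun b hb u hu => neg_le_neg (hF b (fun t ht => le_of_neg_le_neg (hb t ht)) u hu))
  exact fun t ht => neg_lt_neg_iff.1 (this t ht)

theorem integrable_of_ae_mem_Icc {ν : Measure ℝ} [IsFiniteMeasure ν] {g : ℝ → ℝ} {a b : ℝ}
    (hν : ∀ᵐ s ∂ν, s ∈ Icc a b) (hg : Continuous g) : Integrable g ν := by
  rw [← Measure.restrict_eq_self_of_ae_mem hν]
  exact hg.integrableOn_Icc

theorem le_integral_of_ae_mem_Icc {ν : Measure ℝ} [IsProbabilityMeasure ν] {g : ℝ → ℝ}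
    {a b m : ℝ} (hν : ∀ᵐ s ∂ν, s ∈ Icc a b) (hg : Continuous g) (hm : ∀ s ∈ Icc a b, m ≤ g s) :
    m ≤ ∫ s, g s ∂ν := by
  simpa using integral_mono_ae (integrable_const m) (integrable_of_ae_mem_Icc hν hg) (hν.mono hm)

theorem integral_le_of_ae_mem_Icc {ν : Measure ℝ} [IsProbabilityMeasure ν] {g : ℝ → ℝ}
    {a b M : ℝ} (hν : ∀ᵐ s ∂ν, s ∈ Icc a b) (hg : Continuous g) (hM : ∀ s ∈ Icc a b, g s ≤ M) :
    ∫ s, g s ∂ν ≤ M := by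
  simpa using integral_mono_ae (integrable_of_ae_mem_Icc hν hg) (integrable_const M) (hν.mono hM)

theorem Continuous.exists_forall_Iic_abs_le {g : ℝ → ℝ} (hg : Continuous g) {a R : ℝ}
    (hR : ∀ s ≤ a, |g s| ≤ R) (T : ℝ) : ∃ R', ∀ s ≤ T, |g s| ≤ R' := by
  obtain ⟨R₁, hR₁⟩ := isCompact_Icc.exists_bound_of_continuousOn (hg.continuousOn (s := Icc a T))
  refine ⟨max R R₁, fun s hs => ?_⟩
  rcases le_or_gt s a with hsa | has
  · exact le_max_of_le_left (hR s hsa)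
  · exact le_max_of_le_right (hR₁ s ⟨has.le, hs⟩)

theorem intervalIntegrable_mul_integral_sub_s2 {f x r : ℝ → ℝ} {μ : ℝ → Measure ℝ} {C R T : ℝ}
    (hf : Continuous f) (hx : Continuous x) (hxR : ∀ s ≤ 0, |x s| ≤ R)
    (hr : Measurable r) (hr0 : ∀ t, 0 ≤ r t) (hrC : ∀ᵐ t, r t ≤ C)
    (hμ_prob : ∀ t, 0 ≤ t → IsProbabilityMeasure (μ t))
    (hμ_past : ∀ t, 0 ≤ t → ∀ᵐ s ∂μ t, s ≤ t)
    (hμ_meas : ∀ g : ℝ → ℝ, Measurable g → (∃ C : ℝ, ∀ y, |g y| ≤ C) →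
      Measurable fun t => ∫ s, g s ∂μ t)
    (hT : 0 ≤ T) :
    IntervalIntegrable (fun u => r u * ((∫ s, f (x s) ∂μ u) - x u)) volume 0 T := by
  obtain ⟨Rx, hRx⟩ := hx.exists_forall_Iic_abs_le hxR T
  obtain ⟨Rf, hRf⟩ :=
    isCompact_Icc.exists_bound_of_continuousOn (hf.continuousOn (s := Icc (-Rx) Rx))
  -- `μ u` lives on `(-∞, u]`, where `g` agrees with `f ∘ x` when `u ≤ T`
  set g : ℝ → ℝ := fun s => f (x (min s T))
  have hg : ∀ s, |g s| ≤ Rf := fun s => hRf _ (abs_le.1 (hRx _ (min_le_right s T)))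
  have hG : Measurable fun u => ∫ s, g s ∂μ u :=
    hμ_meas g (by fun_prop : Continuous g).measurable ⟨Rf, hg⟩
  have hFG : EqOn (fun u => r u * ((∫ s, g s ∂μ u) - x u))
      (fun u => r u * ((∫ s, f (x s) ∂μ u) - x u)) (Ioc 0 T) := fun u hu => by
    simp only [integral_congr_ae ((hμ_past u hu.1.le).mono fun s hs =>
      show g s = f (x s) by simp only [g, min_eq_left (hs.trans hu.2)])]
  rw [intervalIntegrable_iff_integrableOn_Ioc_of_le hT]
  refine (Measure.integrableOn_of_bounded (M := C * (Rf + Rx))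
    (f := fun u => r u * ((∫ s, g s ∂μ u) - x u)) measure_Ioc_lt_top.ne
    (hr.mul (hG.sub hx.measurable)).aestronglyMeasurable ?_).congr_fun hFG measurableSet_Ioc
  filter_upwards [ae_restrict_of_ae hrC, ae_restrict_mem measurableSet_Ioc] with u hru hu
  have := hμ_prob u hu.1.le
  have hGu : |∫ s, g s ∂μ u| ≤ Rf := by
    simpa using norm_integral_le_of_norm_le_const (μ := μ u) (f := g) (Eventually.of_forall hg)
  rw [Real.norm_eq_abs, abs_mul, abs_of_nonneg (hr0 u)]
  exact mul_le_mul hru ((abs_sub _ _).trans (add_le_add hGu (hRx u hu.2))) (abs_nonneg _)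
    ((hr0 u).trans hru)

def LowerComparison (f h x : ℝ → ℝ) : Prop :=
  ∀ a m, 0 ≤ a → m < x a →
    (∀ b, (∀ t ∈ Icc a b, m ≤ x t) → ∀ u ∈ Icc a b, ∀ s ∈ Icc (h u) u, m ≤ f (x s)) →
    ∀ t, a ≤ t → m < x t

def UpperComparison (f h x : ℝ → ℝ) : Prop :=
  ∀ a M, 0 ≤ a → x a < M →
    (∀ b, (∀ t ∈ Icc a b, x t ≤ M) → ∀ u ∈ Icc a b, ∀ s ∈ Icc (h u) u, f (x s) ≤ M) →
    ∀ t, a ≤ t → x t < M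

theorem LowerComparison.forall_pos {f h x : ℝ → ℝ} (hx : LowerComparison f h x)
    (hx_past : ∀ t ≤ 0, 0 ≤ x t) (hx0 : 0 < x 0) (hf_nonneg : ∀ y, 0 ≤ y → 0 ≤ f y) :
    ∀ t, 0 ≤ t → 0 < x t := by
  refine hx 0 0 le_rfl hx0 fun b hb u hu s hs => hf_nonneg _ ?_
  rcases le_total s 0 with hs0 | hs0
  · exact hx_past s hs0
  · exact hb s ⟨hs0, hs.2.trans hu.2⟩

theorem UpperComparison.forall_le_max {f h x : ℝ → ℝ} {M₀ B : ℝ} (hx : UpperComparison f h x)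
    (hx_nonneg : ∀ t, 0 ≤ x t) (hx_past : ∀ t ≤ 0, x t ≤ B)
    (hf : ∀ y, 0 ≤ y → f y ≤ max M₀ y) : ∀ t, 0 ≤ t → x t ≤ max M₀ B := by
  refine fun t ht => le_of_forall_gt fun M hM => hx 0 M le_rfl ?_ (fun b hb u hu s hs => ?_) t ht
  · exact (hx_past 0 le_rfl).trans_lt ((le_max_right _ _).trans_lt hM)
  have hxs : x s ≤ M := by
    rcases le_total s 0 with hs0 | hs0
    · exact (hx_past s hs0).trans ((le_max_right _ _).trans hM.le)
    · exact hb s ⟨hs0, hs.2.trans hu.2⟩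
  exact (hf _ (hx_nonneg s)).trans (max_le ((le_max_left _ _).trans hM.le) hxs)

theorem LowerComparison.exists_pos_forall_le {f h x : ℝ → ℝ} {B c : ℝ}
    (hx : LowerComparison f h x) (hx_cont : Continuous x) (hpos : ∀ t, 0 ≤ t → 0 < x t)
    (hB : ∀ t, 0 ≤ t → x t ≤ B) (hh : ∀ᶠ u in atTop, 0 ≤ h u) (hc : 0 < c)
    (hfc : ∀ y, 0 ≤ y → y ≤ B → min y c ≤ f y) : ∃ A > 0, ∀ t, 0 ≤ t → A ≤ x t := by
  obtain ⟨T₀, hT₀⟩ := eventually_atTop.1 hh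
  set T := max T₀ 0
  obtain ⟨w, hw, hw_min⟩ :=
    isCompact_Icc.exists_isMinOn (nonempty_Icc.2 (le_max_right T₀ 0)) hx_cont.continuousOn
  set A := min (x w) c
  have hA_init : ∀ t ∈ Icc 0 T, A ≤ x t := fun t ht => (min_le_left _ _).trans (hw_min ht)
  refine ⟨A, lt_min (hpos w hw.1) hc, fun t ht => ?_⟩
  rcases le_total t T with htT | hTt
  · exact hA_init t ⟨ht, htT⟩
  -- after time `T` the delay windows lie in `[0, ∞)`, where `0 < x ≤ B`
  refine le_of_forall_lt fun m hm => hx T m (le_max_right _ _)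
    (hm.trans_le (hA_init T ⟨le_max_right _ _, le_rfl⟩)) (fun b hb u hu s hs => ?_) t hTt
  have hs0 : 0 ≤ s := (hT₀ u ((le_max_left _ _).trans hu.1)).trans hs.1
  have hxs : m ≤ x s := by
    rcases le_total s T with hsT | hTs
    · exact hm.le.trans (hA_init s ⟨hs0, hsT⟩)
    · exact hb s ⟨hTs, hs.2.trans hu.2⟩
  exact (le_min hxs (hm.le.trans (min_le_right _ _))).trans (hfc _ (hpos s hs0).le (hB s hs0))

theorem distributed_delay_permanence_general
    (f : ℝ → ℝ) (K : ℝ) (hK : 0 < K)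
    (h r : ℝ → ℝ) (μ : ℝ → Measure ℝ) (φ : ℝ → ℝ)
    (hf_cont : Continuous f)
    (hf_nonneg : ∀ y : ℝ, 0 ≤ y → 0 ≤ f y)
    (hf_below : ∀ y : ℝ, 0 < y → y < K → y < f y)
    (hf_above : ∀ y : ℝ, K < y → 0 < f y ∧ f y < y)
    (hh_tend : Tendsto h atTop atTop)
    (hr_meas : Measurable r)
    (hr_nonneg : ∀ t : ℝ, 0 ≤ r t)
    (hr_bdd : ∃ C : ℝ, ∀ᵐ t ∂volume, r t ≤ C)
    (hμ_prob : ∀ t : ℝ, 0 ≤ t → IsProbabilityMeasure (μ t))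
    (hμ_supp : ∀ t : ℝ, 0 ≤ t → μ t (Icc (h t) t)ᶜ = 0)
    (hμ_meas : ∀ g : ℝ → ℝ, Measurable g → (∃ C : ℝ, ∀ y : ℝ, |g y| ≤ C) →
      Measurable (fun t => ∫ s, g s ∂(μ t)))
    (hφ_bdd : ∃ C : ℝ, ∀ t : ℝ, t ≤ 0 → |φ t| ≤ C)
    (hφ_nonneg : ∀ t : ℝ, t ≤ 0 → 0 ≤ φ t)
    (hφ_pos : 0 < φ 0)
    (x : ℝ → ℝ)
    (hx_cont : Continuous x)
    (hx_init : ∀ t : ℝ, t ≤ 0 → x t = φ t)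
    (hx_sol : ∀ t : ℝ, 0 ≤ t →
      x t = φ 0 + ∫ u in (0:ℝ)..t, r u * ((∫ s, f (x s) ∂(μ u)) - x u))
    :
    ∃ A B : ℝ, 0 < A ∧ A ≤ B ∧ ∀ t : ℝ, 0 ≤ t → A ≤ x t ∧ x t ≤ B := by
  obtain ⟨C, hrC⟩ := hr_bdd
  obtain ⟨Cφ, hCφ⟩ := hφ_bdd
  have hsupp (u : ℝ) (hu : 0 ≤ u) : ∀ᵐ s ∂μ u, s ∈ Icc (h u) u := ae_iff.2 (hμ_supp u hu)
  have hint (T : ℝ) (hT : 0 ≤ T) := intervalIntegrable_mul_integral_sub_s2 hf_cont hx_cont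
    (fun s hs => hx_init s hs ▸ hCφ s hs) hr_meas hr_nonneg hrC hμ_prob
    (fun u hu => (hsupp u hu).mono fun _ hs => hs.2) hμ_meas hT
  have hlower : LowerComparison f h x := fun a m ha hxa hfx =>
    forall_lt_of_le_forcing hr_nonneg hrC hx_cont hint hx_sol ha hxa fun b hb u hu =>
      have := hμ_prob u (ha.trans hu.1)
      le_integral_of_ae_mem_Icc (hsupp u (ha.trans hu.1)) (hf_cont.comp hx_cont) (hfx b hb u hu)
  have hupper : UpperComparison f h x := fun a M ha hxa hfx =>
    forall_lt_of_forcing_le hr_nonneg hrC hx_cont hint hx_sol ha hxa fun b hb u hu =>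
      have := hμ_prob u (ha.trans hu.1)
      integral_le_of_ae_mem_Icc (hsupp u (ha.trans hu.1)) (hf_cont.comp hx_cont) (hfx b hb u hu)
  have hx_past (t : ℝ) (ht : t ≤ 0) : 0 ≤ x t := hx_init t ht ▸ hφ_nonneg t ht
  have hpos := hlower.forall_pos hx_past (hx_init 0 le_rfl ▸ hφ_pos) hf_nonneg
  obtain ⟨M₀, hM₀⟩ := exists_forall_apply_le_max hf_cont fun y hy => (hf_above y hy).2
  have hub := hupper.forall_le_max (fun t => (le_total t 0).elim (hx_past t) (hpos t · |>.le))
    (fun t ht => hx_init t ht ▸ (le_abs_self _).trans (hCφ t ht)) hM₀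
  obtain ⟨c, hc, hfc⟩ := exists_pos_forall_min_le_apply hf_cont hK hf_below
    (fun y hy => (hf_above y hy).1) (max M₀ Cφ)
  obtain ⟨A, hA, hlb⟩ :=
    hlower.exists_pos_forall_le hx_cont hpos hub (hh_tend.eventually_ge_atTop 0) hc hfc
  exact ⟨A, max M₀ Cφ, hA, (hlb 0 le_rfl).trans (hub 0 le_rfl), fun t ht => ⟨hlb t ht, hub t ht⟩⟩

theorem distributed_delay_permanence
    (f : ℝ → ℝ) (L K : ℝ) (hL : 0 ≤ L) (hK : 0 < K)
    (h r : ℝ → ℝ) (μ : ℝ → Measure ℝ) (φ : ℝ → ℝ)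
    (hf_cont : Continuous f)
    (hf_nonneg : ∀ y : ℝ, 0 ≤ y → 0 ≤ f y)
    (hf_lip : ∀ u v : ℝ, 0 ≤ u → 0 ≤ v → |f u - f v| ≤ L * |u - v|)
    (hf_zero : f 0 = 0)
    (hf_below : ∀ y : ℝ, 0 < y → y < K → y < f y)
    (hf_above : ∀ y : ℝ, K < y → 0 < f y ∧ f y < y)
    (hh_meas : Measurable h)
    (hh_le : ∀ t : ℝ, 0 ≤ t → h t ≤ t)
    (hh_tend : Tendsto h atTop atTop)
    (hr_meas : Measurable r)
    (hr_nonneg : ∀ t : ℝ, 0 ≤ r t)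
    (hr_bdd : ∃ C : ℝ, ∀ᵐ t ∂volume, r t ≤ C)
    (hr_div : ¬ IntegrableOn r (Ici (0 : ℝ)))
    (hμ_prob : ∀ t : ℝ, 0 ≤ t → IsProbabilityMeasure (μ t))
    (hμ_supp : ∀ t : ℝ, 0 ≤ t → μ t (Icc (h t) t)ᶜ = 0)
    (hμ_meas : ∀ g : ℝ → ℝ, Measurable g → (∃ C : ℝ, ∀ y : ℝ, |g y| ≤ C) →
      Measurable (fun t => ∫ s, g s ∂(μ t)))
    (hφ_cont : ContinuousOn φ (Iic (0 : ℝ)))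
    (hφ_bdd : ∃ C : ℝ, ∀ t : ℝ, t ≤ 0 → |φ t| ≤ C)
    (hφ_nonneg : ∀ t : ℝ, t ≤ 0 → 0 ≤ φ t)
    (hφ_pos : 0 < φ 0)
    (x : ℝ → ℝ)
    (hx_cont : Continuous x)
    (hx_init : ∀ t : ℝ, t ≤ 0 → x t = φ t)
    (hx_sol : ∀ t : ℝ, 0 ≤ t →
      x t = φ 0 + ∫ u in (0:ℝ)..t, r u * ((∫ s, f (x s) ∂(μ u)) - x u))
    :
    ∃ A B : ℝ, 0 < A ∧ A ≤ B ∧ ∀ t : ℝ, 0 ≤ t → A ≤ x t ∧ x t ≤ B :=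
  distributed_delay_permanence_general f K hK h r μ φ hf_cont hf_nonneg hf_below hf_above hh_tend
    hr_meas hr_nonneg hr_bdd hμ_prob hμ_supp hμ_meas hφ_bdd hφ_nonneg hφ_pos x hx_cont hx_init
    hx_sol
end

section
/- Under hypotheses (a1)–(a5), every solution x of the initial value problem for the distributed-delay equation that is nonoscillatory about K converges to K: if there exists τ > 0 such that either x(t) > K for all t ≥ τ or x(t) < K for all t ≥ τ, then lim_{t→∞} x(t) = K. -/
/-!
With `F u = ∫ f (x s) dμ_u`, the solution solves `x' = r (F - x)`, and `F v` is controlled by the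
values of `f` on `x '' [h v, v]`. A solution cannot cross upwards a level that `F` stays below, and
since `∫ r = ∞` it eventually comes within any `ε` of any eventual upper bound of `F`.

If `x > K` from `τ` on, the first fact shows that `x` never exceeds its maximum over an initial
stretch. Let `I` be the infimum of the eventual upper bounds of `x`. If `I > K`, then `f < I` on
`[K, I]` because `f y < y` there, hence by continuity on some `[K, I + δ]`; feeding an eventual
bound `M < I + δ` into the second fact yields an eventual bound below `I`. So `I = K`.
The case `x < K` is the mirror image under `x ↦ -x`, once `x` is known to stay positive, which holds
because `F ≥ 0` as long as `x ≥ 0`, so that `x` decays at most exponentially.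
-/

open MeasureTheory Filter Set Topology Bornology

theorem exists_last_le_of_lt {x : ℝ → ℝ} (hx : Continuous x) {a b β : ℝ} (hab : a ≤ b)
    (ha : x a ≤ β) (hb : β < x b) :
    ∃ w ∈ Ico a b, x w ≤ β ∧ ∀ v ∈ Ioc w b, β < x v := by
  have hS : IsCompact (Icc a b ∩ x ⁻¹' Iic β) :=
    isCompact_Icc.inter_right (isClosed_Iic.preimage hx)
  obtain ⟨⟨hwa, hwb⟩, hwβ⟩ := hS.sSup_mem ⟨a, ⟨le_rfl, hab⟩, ha⟩
  refine ⟨_, ⟨hwa, hwb.lt_of_ne fun hw => ?_⟩, hwβ, fun v hv => not_le.1 fun hvβ => ?_⟩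
  · exact (hw ▸ hwβ : x b ≤ β).not_gt hb
  · exact hv.1.not_ge (le_csSup hS.bddAbove ⟨⟨hwa.trans hv.1.le, hv.2⟩, hvβ⟩)

theorem exists_first_nonpos {x : ℝ → ℝ} (hx : Continuous x) {a b : ℝ} (ha : 0 < x a)
    (hab : a ≤ b) (hb : x b ≤ 0) :
    ∃ c ∈ Ioc a b, x c ≤ 0 ∧ ∀ s ∈ Ico a c, 0 < x s := by
  have hS : IsCompact (Icc a b ∩ x ⁻¹' Iic 0) :=
    isCompact_Icc.inter_right (isClosed_Iic.preimage hx)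
  obtain ⟨⟨hca, hcb⟩, hc⟩ := hS.sInf_mem ⟨b, ⟨hab, le_rfl⟩, hb⟩
  refine ⟨_, ⟨hca.lt_of_ne fun hc' => ?_, hcb⟩, hc, fun s hs => not_le.1 fun hs0 => ?_⟩
  · exact (hc' ▸ hc : x a ≤ 0).not_gt ha
  · exact hs.2.not_ge (csInf_le hS.bddBelow ⟨⟨hs.1, hs.2.le.trans hcb⟩, hs0⟩)

theorem ContinuousAt.eq_of_lt_of_gt {f : ℝ → ℝ} {K : ℝ} (hf : ContinuousAt f K)
    (hlt : ∀ᶠ y in 𝓝[<] K, y < f y) (hgt : ∀ᶠ y in 𝓝[>] K, f y < y) : f K = K := by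
  have hlim : Tendsto (fun y => f y - y) (𝓝 K) (𝓝 (f K - K)) := hf.sub continuousAt_id
  have hle : f K - K ≤ 0 := le_of_tendsto (hlim.mono_left nhdsWithin_le_nhds)
    (hgt.mono fun y hy => (sub_neg.2 hy).le)
  have hge : 0 ≤ f K - K := ge_of_tendsto (hlim.mono_left nhdsWithin_le_nhds)
    (hlt.mono fun y hy => (sub_pos.2 hy).le)
  linarith

theorem Continuous.isBounded_image_Iic {x : ℝ → ℝ} (hx : Continuous x) {a : ℝ}
    (ha : IsBounded (x '' Iic a)) (b : ℝ) : IsBounded (x '' Iic b) := by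
  refine (ha.union ((isCompact_Icc (a := a) (b := b)).image hx).isBounded).subset ?_
  rintro _ ⟨s, hs, rfl⟩
  rcases le_total s a with hsa | has
  · exact Or.inl ⟨s, hsa, rfl⟩
  · exact Or.inr ⟨s, ⟨has, hs⟩, rfl⟩

theorem integral_le_of_forall_mem_le {α : Type*} [TopologicalSpace α] [T2Space α]
    [MeasurableSpace α] [OpensMeasurableSpace α] {μ : Measure α} [IsProbabilityMeasure μ]
    {s : Set α} (hs : IsCompact s) (hμ : μ sᶜ = 0) {g : α → ℝ} (hg : ContinuousOn g s) {γ : ℝ}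
    (hγ : ∀ y ∈ s, g y ≤ γ) : ∫ y, g y ∂μ ≤ γ := by
  have hae : ∀ᵐ y ∂μ, y ∈ s := hμ
  have hint : Integrable g μ := by
    simpa only [IntegrableOn, Measure.restrict_eq_self_of_ae_mem hae] using
      hg.integrableOn_compact (μ := μ) hs
  simpa using integral_mono_ae hint (integrable_const γ) (hae.mono hγ)

theorem tendsto_intervalIntegral_atTop_of_not_integrableOn {r : ℝ → ℝ} (hr : ∀ u, 0 ≤ r u)
    (hr_int : ∀ a b, IntervalIntegrable r volume a b) {c : ℝ} (hdiv : ¬IntegrableOn r (Ici c))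
    (a : ℝ) : Tendsto (fun b => ∫ u in a..b, r u) atTop atTop := by
  refine tendsto_atTop_atTop_of_monotone (fun b b' hbb' => ?_) fun A => ?_
  · rw [← sub_nonneg, intervalIntegral.integral_interval_sub_left (hr_int a b') (hr_int a b)]
    exact intervalIntegral.integral_nonneg hbb' fun u _ => hr u
  · by_contra! hbdd
    refine hdiv ((integrableOn_Ici_iff_integrableOn_Ioi (by finiteness)).2 ?_)
    have hIoi : IntegrableOn r (Ioi a) :=
      integrableOn_Ioi_of_intervalIntegral_norm_bounded A a (fun b => (hr_int a b).1)
        tendsto_id (Eventually.of_forall fun b => by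
          simpa only [Real.norm_of_nonneg (hr _)] using (hbdd b).le)
    refine ((hr_int (min c a) a).1.union hIoi).mono_set fun t (ht : c < t) => ?_
    rcases le_or_gt t a with hta | hat
    · exact Or.inl ⟨(min_le_left c a).trans_lt ht, hta⟩
    · exact Or.inr hat

/-- `x` solves `x' = r (F - x)` on `[T, ∞)`, in integrated form. -/
structure RelaxesToward (r F x : ℝ → ℝ) (T : ℝ) : Prop where
  continuous : Continuous x
  rate_nonneg : ∀ u, 0 ≤ r u
  rate_intervalIntegrable : ∀ a b, IntervalIntegrable r volume a b
  intervalIntegrable : ∀ a b, T ≤ a → a ≤ b →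
    IntervalIntegrable (fun u => r u * (F u - x u)) volume a b
  sub_eq_integral : ∀ a b, T ≤ a → a ≤ b → x b - x a = ∫ u in a..b, r u * (F u - x u)

/-- `F v ≤ sup (g ∘ x) '' [h v, v]` for `v ≥ T`, phrased without `sSup`. -/
def WindowDominated (h g x F : ℝ → ℝ) (T : ℝ) : Prop :=
  ∀ v, T ≤ v → ∀ γ, (∀ s ∈ Icc (h v) v, g (x s) ≤ γ) → F v ≤ γ

theorem WindowDominated.eventually_le {h g x F : ℝ → ℝ} {T c : ℝ}
    (hW : WindowDominated h g x F T) (hh : Tendsto h atTop atTop)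
    (hc : ∀ᶠ s in atTop, g (x s) ≤ c) : ∀ᶠ v in atTop, F v ≤ c := by
  obtain ⟨S, hS⟩ := eventually_atTop.1 hc
  filter_upwards [eventually_ge_atTop T, hh.eventually_ge_atTop S] with v hTv hSv
  exact hW v hTv c fun s hs => hS s (hSv.trans hs.1)

namespace RelaxesToward

variable {r F x g h : ℝ → ℝ} {T K τ : ℝ}

theorem of_eq_add_integral (hx : Continuous x) (hr : ∀ u, 0 ≤ r u)
    (hr_int : ∀ a b, IntervalIntegrable r volume a b)
    (hint : ∀ a b, T ≤ a → a ≤ b → IntervalIntegrable (fun u => r u * (F u - x u)) volume a b)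
    {c : ℝ} (hsol : ∀ t, T ≤ t → x t = c + ∫ u in T..t, r u * (F u - x u)) :
    RelaxesToward r F x T where
  continuous := hx
  rate_nonneg := hr
  rate_intervalIntegrable := hr_int
  intervalIntegrable := hint
  sub_eq_integral a b ha hab := by
    rw [hsol b (ha.trans hab), hsol a ha, add_sub_add_left_eq_sub,
      intervalIntegral.integral_interval_sub_left (hint T b le_rfl (ha.trans hab))
        (hint T a le_rfl ha)]

theorem neg (hs : RelaxesToward r F x T) : RelaxesToward r (-F) (-x) T := by
  have hneg : (fun u => r u * ((-F) u - (-x) u)) = fun u => -(r u * (F u - x u)) := by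
    funext u
    simp only [Pi.neg_apply]
    ring
  refine ⟨hs.continuous.neg, hs.rate_nonneg, hs.rate_intervalIntegrable,
    fun a b ha hab => hneg ▸ (hs.intervalIntegrable a b ha hab).neg, fun a b ha hab => ?_⟩
  rw [hneg, intervalIntegral.integral_neg, ← hs.sub_eq_integral a b ha hab, Pi.neg_apply,
    Pi.neg_apply, neg_sub_neg, neg_sub]

theorem le_of_forcing_le (hs : RelaxesToward r F x T) {a b β : ℝ} (ha : T ≤ a) (hab : a ≤ b)
    (hxa : x a ≤ β) (hF : ∀ v ∈ Ioc a b, F v ≤ β) : x b ≤ β := by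
  by_contra! hxb
  obtain ⟨w, ⟨haw, hwb⟩, hxw, habove⟩ := exists_last_le_of_lt hs.continuous hab hxa hxb
  have hdecr : x b - x w ≤ 0 := by
    rw [hs.sub_eq_integral w b (ha.trans haw) hwb.le, ← intervalIntegral.integral_zero]
    refine intervalIntegral.integral_mono_on_of_le_Ioo hwb.le
      (hs.intervalIntegrable w b (ha.trans haw) hwb.le) intervalIntegrable_const fun v hv => ?_
    have hFv := hF v ⟨haw.trans_lt hv.1, hv.2.le⟩
    have hxv := habove v ⟨hv.1, hv.2.le⟩
    exact mul_nonpos_of_nonneg_of_nonpos (hs.rate_nonneg v) (by linarith)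
  linarith

theorem eventually_le_add (hs : RelaxesToward r F x T)
    (hdiv : ∀ a, Tendsto (fun b => ∫ u in a..b, r u) atTop atTop) {c ε : ℝ}
    (hF : ∀ᶠ v in atTop, F v ≤ c) (hε : 0 < ε) : ∀ᶠ t in atTop, x t ≤ c + ε := by
  obtain ⟨T₁, hT₁⟩ := eventually_atTop.1 ((eventually_ge_atTop T).and hF)
  have hTT₁ : T ≤ T₁ := (hT₁ T₁ le_rfl).1
  obtain ⟨t₁, ht₁, hxt₁⟩ : ∃ t₁, T₁ ≤ t₁ ∧ x t₁ ≤ c + ε := by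
    by_contra! habove
    obtain ⟨b, hb, hrb⟩ := ((eventually_ge_atTop T₁).and
      ((hdiv T₁).eventually_ge_atTop ((x T₁ - c) / ε))).exists
    have hdrop : x b - x T₁ ≤ ∫ u in T₁..b, -ε * r u := by
      rw [hs.sub_eq_integral T₁ b hTT₁ hb]
      refine intervalIntegral.integral_mono_on hb (hs.intervalIntegrable T₁ b hTT₁ hb)
        ((hs.rate_intervalIntegrable T₁ b).const_mul _) fun u hu => ?_
      have hFu := (hT₁ u hu.1).2
      have hxu := habove u hu.1
      nlinarith [hs.rate_nonneg u]
    rw [intervalIntegral.integral_const_mul] at hdrop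
    rw [div_le_iff₀ hε] at hrb
    linarith [habove b hb]
  filter_upwards [eventually_ge_atTop t₁] with t ht
  exact hs.le_of_forcing_le (hTT₁.trans ht₁) ht hxt₁ fun v hv =>
    (hT₁ v (ht₁.trans hv.1.le)).2.trans (by linarith)

theorem pos (hs : RelaxesToward r F x T) (hxT : 0 < x T)
    (hF : ∀ v, T ≤ v → (∀ s ∈ Icc T v, 0 ≤ x s) → 0 ≤ F v) {t : ℝ} (ht : T ≤ t) : 0 < x t := by
  by_contra! hxt
  obtain ⟨t₀, ⟨hTt₀, -⟩, hxt₀, hbefore⟩ := exists_first_nonpos hs.continuous hxT ht hxt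
  obtain ⟨s₀, ⟨hTs₀, hs₀t₀⟩, hsmall⟩ : ∃ s₀ ∈ Ioo T t₀, ∫ u in s₀..t₀, r u ≤ 1 / 2 := by
    have hcont : Tendsto (fun s => ∫ u in s..t₀, r u) (𝓝 t₀) (𝓝 0) := by
      convert ((intervalIntegral.continuous_primitive hs.rate_intervalIntegrable t₀).tendsto
        t₀).neg using 1
      · exact funext fun s => intervalIntegral.integral_symm t₀ s
      · simp
    have hnear : ∀ᶠ s in 𝓝[<] t₀, s ∈ Ioo T t₀ := Ioo_mem_nhdsLT hTt₀
    exact (hnear.and (nhdsWithin_le_nhds (hcont.eventually (ge_mem_nhds one_half_pos)))).exists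
  obtain ⟨u, ⟨hs₀u, hut₀⟩, hmax⟩ :=
    isCompact_Icc.exists_isMaxOn ⟨s₀, le_rfl, hs₀t₀.le⟩ hs.continuous.continuousOn
  have hxu : 0 < x u := (hbefore s₀ ⟨hTs₀.le, hs₀t₀⟩).trans_le (hmax ⟨le_rfl, hs₀t₀.le⟩)
  have hTu : T ≤ u := hTs₀.le.trans hs₀u
  -- `x' ≥ -r x ≥ -r (x u)` on `[u, t₀]`, where `∫ r ≤ 1 / 2`
  have hdrop : -x u * (1 / 2) ≤ x t₀ - x u := calc
    -x u * (1 / 2) ≤ -x u * ∫ v in u..t₀, r v := by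
      refine mul_le_mul_of_nonpos_left (hsmall.trans' ?_) (by linarith)
      exact intervalIntegral.integral_mono_interval hs₀u hut₀ le_rfl
        (Eventually.of_forall hs.rate_nonneg) (hs.rate_intervalIntegrable s₀ t₀)
    _ = ∫ v in u..t₀, r v * -x u := by
      rw [← intervalIntegral.integral_const_mul]
      simp only [mul_comm]
    _ ≤ ∫ v in u..t₀, r v * (F v - x v) := by
      refine intervalIntegral.integral_mono_on_of_le_Ioo hut₀
        ((hs.rate_intervalIntegrable u t₀).mul_const _) (hs.intervalIntegrable u t₀ hTu hut₀)
        fun v hv => mul_le_mul_of_nonneg_left ?_ (hs.rate_nonneg v)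
      have hFv := hF v (hTu.trans hv.1.le) fun s hs' =>
        (hbefore s ⟨hs'.1, hs'.2.trans_lt hv.2⟩).le
      have hxv : x v ≤ x u := hmax ⟨hs₀u.trans hv.1.le, hv.2.le⟩
      linarith
    _ = x t₀ - x u := (hs.sub_eq_integral u t₀ hTu hut₀).symm
  linarith

theorem exists_isMaxOn (hs : RelaxesToward r F x T) (hh : Tendsto h atTop atTop)
    (hW : WindowDominated h g x F T) (hg : Continuous g) (hgK : g K ≤ K)
    (hxK : ∀ t, τ ≤ t → K < x t) (hg_lt : ∀ t, τ ≤ t → ∀ y ∈ Ioc K (x t), g y < y) :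
    ∃ u₀ ∈ Ici τ, IsMaxOn x (Ici τ) u₀ := by
  obtain ⟨T₀, hT₀⟩ :=
    eventually_atTop.1 ((eventually_ge_atTop (max T τ)).and (hh.eventually_ge_atTop τ))
  have hTT₀ : max T τ ≤ T₀ := (hT₀ T₀ le_rfl).1
  obtain ⟨u₀, hu₀, hmax₀⟩ := isCompact_Icc.exists_isMaxOn
    ⟨τ, le_rfl, le_of_max_le_right hTT₀⟩ hs.continuous.continuousOn
  refine ⟨u₀, hu₀.1, fun t ht => show x t ≤ x u₀ from not_lt.1 fun hlt => ?_⟩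
  obtain ⟨u₁, hu₁, hmax₁⟩ := isCompact_Icc.exists_isMaxOn ⟨τ, le_rfl, ht⟩
    hs.continuous.continuousOn
  have hx₀₁ : x u₀ < x u₁ := hlt.trans_le (hmax₁ ⟨ht, le_rfl⟩)
  have hT₀u₁ : T₀ ≤ u₁ := le_of_not_ge fun h => (hmax₀ ⟨hu₁.1, h⟩).not_gt hx₀₁
  obtain ⟨y, hy, hymax⟩ := isCompact_Icc.exists_isMaxOn ⟨K, le_rfl, (hxK u₁ hu₁.1).le⟩
    hg.continuousOn
  have hgy : g y < x u₁ := by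
    rcases hy.1.eq_or_lt with rfl | hKy
    · exact hgK.trans_lt (hxK u₁ hu₁.1)
    · exact (hg_lt u₁ hu₁.1 y ⟨hKy, hy.2⟩).trans_le hy.2
  -- up to time `u₁` the delayed values of `x` stay in `(K, x u₁]`, where `g ≤ g y`
  have hxu₁ : x u₁ ≤ max (g y) (x u₀) := by
    refine hs.le_of_forcing_le (le_of_max_le_left hTT₀) hT₀u₁
      ((hmax₀ ⟨le_of_max_le_right hTT₀, le_rfl⟩).trans (le_max_right _ _)) fun v hv => ?_
    refine hW v ((le_max_left _ _).trans (hTT₀.trans hv.1.le)) _ fun s hs' => ?_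
    have hτs : τ ≤ s := (hT₀ v hv.1.le).2.trans hs'.1
    exact (hymax ⟨(hxK s hτs).le, hmax₁ ⟨hτs, hs'.2.trans (hv.2.trans hu₁.2)⟩⟩).trans
      (le_max_left _ _)
  exact hxu₁.not_gt (max_lt hgy hx₀₁)

theorem tendsto_of_forall_gt (hs : RelaxesToward r F x T)
    (hdiv : ∀ a, Tendsto (fun b => ∫ u in a..b, r u) atTop atTop) (hh : Tendsto h atTop atTop)
    (hW : WindowDominated h g x F T) (hg : Continuous g) (hgK : g K ≤ K)
    (hxK : ∀ t, τ ≤ t → K < x t) (hg_lt : ∀ t, τ ≤ t → ∀ y ∈ Ioc K (x t), g y < y) :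
    Tendsto x atTop (𝓝 K) := by
  obtain ⟨u₀, hu₀, hmax⟩ := hs.exists_isMaxOn hh hW hg hgK hxK hg_lt
  have hgt : ∀ᶠ t in atTop, K < x t := eventually_atTop.2 ⟨τ, hxK⟩
  set E := {M | ∀ᶠ t in atTop, x t ≤ M}
  have hu₀E : x u₀ ∈ E := eventually_atTop.2 ⟨τ, fun t ht => hmax ht⟩
  have hKE : ∀ M ∈ E, K ≤ M := fun M hM =>
    let ⟨_, hKt, htM⟩ := (hgt.and hM).exists
    (hKt.trans_le htM).le
  have hIK : sInf E ≤ K := by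
    by_contra! hKI
    set I := sInf E
    have hgI : ∀ y ∈ Icc K I, g y < I := fun y hy => by
      rcases hy.1.eq_or_lt with rfl | hKy
      · exact hgK.trans_lt hKI
      · exact (hg_lt u₀ hu₀ y ⟨hKy, hy.2.trans (csInf_le ⟨K, hKE⟩ hu₀E)⟩).trans_le hy.2
    obtain ⟨δ, hδ, hδI⟩ := Metric.eventually_nhds_iff.1
      ((hg.tendsto I).eventually (gt_mem_nhds (hgI I ⟨hKI.le, le_rfl⟩)))
    obtain ⟨M, hME, hMI⟩ := exists_lt_of_csInf_lt ⟨_, hu₀E⟩ (lt_add_of_pos_right I hδ)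
    obtain ⟨y, hy, hymax⟩ := isCompact_Icc.exists_isMaxOn ⟨K, le_rfl, hKE M hME⟩
      hg.continuousOn
    have hgy : g y < I := by
      rcases le_or_gt y I with hyI | hIy
      · exact hgI y ⟨hy.1, hyI⟩
      · exact hδI (by rw [Real.dist_eq, abs_lt]; constructor <;> linarith [hy.2])
    have hc : ∀ᶠ t in atTop, g (x t) ≤ g y := (hgt.and hME).mono fun t ht => hymax ⟨ht.1.le, ht.2⟩
    have : g y + (I - g y) / 2 ∈ E :=
      hs.eventually_le_add hdiv (hW.eventually_le hh hc) (by linarith)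
    linarith [csInf_le ⟨K, hKE⟩ this]
  refine tendsto_order.2 ⟨fun a ha => hgt.mono fun t ht => ha.trans ht, fun b hb => ?_⟩
  obtain ⟨M, hME, hMb⟩ := exists_lt_of_csInf_lt ⟨_, hu₀E⟩ (hIK.trans_lt hb)
  exact hME.mono fun t ht => ht.trans_lt hMb

end RelaxesToward

theorem windowDominated_integral {g y h : ℝ → ℝ} {μ : ℝ → Measure ℝ}
    (hμ_prob : ∀ t : ℝ, 0 ≤ t → IsProbabilityMeasure (μ t))
    (hμ_supp : ∀ t : ℝ, 0 ≤ t → μ t (Icc (h t) t)ᶜ = 0) (hgy : Continuous (g ∘ y)) :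
    WindowDominated h g y (fun u => ∫ s, g (y s) ∂(μ u)) 0 := fun v hv _ hγ =>
  have := hμ_prob v hv
  integral_le_of_forall_mem_le isCompact_Icc (hμ_supp v hv) hgy.continuousOn hγ

theorem intervalIntegrable_rate_mul_integral_sub {g x r h : ℝ → ℝ} {μ : ℝ → Measure ℝ}
    (hg : Continuous g) (hx : Continuous x) (hr : ∀ a b, IntervalIntegrable r volume a b)
    (hμ_prob : ∀ t : ℝ, 0 ≤ t → IsProbabilityMeasure (μ t))
    (hμ_supp : ∀ t : ℝ, 0 ≤ t → μ t (Icc (h t) t)ᶜ = 0)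
    (hμ_meas : ∀ G : ℝ → ℝ, Measurable G → (∃ C : ℝ, ∀ y : ℝ, |G y| ≤ C) →
      Measurable (fun t => ∫ s, G s ∂(μ t)))
    {a b : ℝ} (hgb : IsBounded (g '' Iic b)) (ha : 0 ≤ a) (hab : a ≤ b) :
    IntervalIntegrable (fun u => r u * ((∫ s, g s ∂(μ u)) - x u)) volume a b := by
  obtain ⟨B, hB⟩ := isBounded_iff_forall_norm_le.1 hgb
  obtain ⟨Bx, hBx⟩ := (isCompact_Icc (a := a) (b := b)).exists_bound_of_continuousOn
    hx.continuousOn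
  -- measurability of `u ↦ ∫ G dμ_u` is only assumed for bounded `G`, so freeze `g` after time `b`
  have hG : Measurable fun u => ∫ s, g (min s b) ∂(μ u) :=
    hμ_meas _ (hg.comp (continuous_id.min continuous_const)).measurable
      ⟨B, fun y => hB _ ⟨_, min_le_right y b, rfl⟩⟩
  have hfrozen : ∀ u ∈ Ioc a b, ∫ s, g s ∂(μ u) = ∫ s, g (min s b) ∂(μ u) := fun u hu => by
    have hae : ∀ᵐ s ∂(μ u), s ∈ Icc (h u) u := hμ_supp u (ha.trans hu.1.le)
    exact integral_congr_ae (hae.mono fun s hs => by simp only [min_eq_left (hs.2.trans hu.2)])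
  have hbound : ∀ u ∈ Ioc a b, ‖∫ s, g s ∂(μ u)‖ ≤ B := fun u hu => by
    have := hμ_prob u (ha.trans hu.1.le)
    have hae : ∀ᵐ s ∂(μ u), s ∈ Icc (h u) u := hμ_supp u (ha.trans hu.1.le)
    simpa using norm_integral_le_of_norm_le_const (μ := μ u)
      (hae.mono fun s hs => hB _ ⟨s, hs.2.trans hu.2, rfl⟩)
  rw [intervalIntegrable_iff_integrableOn_Ioc_of_le hab]
  refine (hr a b).1.mul_bdd (c := B + Bx) ?_ ?_
  · refine ((hG.sub hx.measurable).aestronglyMeasurable).congr ?_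
    filter_upwards [ae_restrict_mem measurableSet_Ioc] with u hu
    rw [Pi.sub_apply, hfrozen u hu]
  · filter_upwards [ae_restrict_mem measurableSet_Ioc] with u hu
    exact (norm_sub_le _ _).trans (add_le_add (hbound u hu) (hBx u (Ioc_subset_Icc_self hu)))

theorem RelaxesToward.of_delay {f x r h : ℝ → ℝ} {μ : ℝ → Measure ℝ} {c : ℝ}
    (hf : Continuous f) (hx : Continuous x) (hx₀ : IsBounded (x '' Iic 0))
    (hr_meas : Measurable r) (hr_nonneg : ∀ t : ℝ, 0 ≤ r t)
    (hr_bdd : ∃ C : ℝ, ∀ᵐ t ∂volume, r t ≤ C)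
    (hμ_prob : ∀ t : ℝ, 0 ≤ t → IsProbabilityMeasure (μ t))
    (hμ_supp : ∀ t : ℝ, 0 ≤ t → μ t (Icc (h t) t)ᶜ = 0)
    (hμ_meas : ∀ G : ℝ → ℝ, Measurable G → (∃ C : ℝ, ∀ y : ℝ, |G y| ≤ C) →
      Measurable (fun t => ∫ s, G s ∂(μ t)))
    (hx_sol : ∀ t : ℝ, 0 ≤ t →
      x t = c + ∫ u in (0:ℝ)..t, r u * ((∫ s, f (x s) ∂(μ u)) - x u)) :
    RelaxesToward r (fun u => ∫ s, f (x s) ∂(μ u)) x 0 := by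
  obtain ⟨C, hC⟩ := hr_bdd
  have hr_int : ∀ a b, IntervalIntegrable r volume a b := fun a b =>
    intervalIntegrable_const.mono_fun' hr_meas.aestronglyMeasurable
      (ae_restrict_of_ae (hC.mono fun t ht => (Real.norm_of_nonneg (hr_nonneg t)).trans_le ht))
  have hfx : ∀ b, IsBounded ((f ∘ x) '' Iic b) := by
    refine (hf.comp hx).isBounded_image_Iic (a := 0) ?_
    rw [image_comp]
    exact (hx₀.isCompact_closure.image hf).isBounded.subset (image_mono subset_closure)
  exact .of_eq_add_integral hx hr_nonneg hr_int (fun a b ha hab =>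
    intervalIntegrable_rate_mul_integral_sub (hf.comp hx) hx hr_int hμ_prob hμ_supp hμ_meas
      (hfx b) ha hab) hx_sol

theorem distributed_delay_nonoscillatory_convergence_general
    (f : ℝ → ℝ) (K : ℝ) (hK : 0 < K)
    (h r : ℝ → ℝ) (μ : ℝ → Measure ℝ) (φ : ℝ → ℝ)
    (hf_cont : Continuous f)
    (hf_nonneg : ∀ y : ℝ, 0 ≤ y → 0 ≤ f y)
    (hf_below : ∀ y : ℝ, 0 < y → y < K → y < f y)
    (hf_above : ∀ y : ℝ, K < y → 0 < f y ∧ f y < y)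
    (hh_tend : Tendsto h atTop atTop)
    (hr_meas : Measurable r)
    (hr_nonneg : ∀ t : ℝ, 0 ≤ r t)
    (hr_bdd : ∃ C : ℝ, ∀ᵐ t ∂volume, r t ≤ C)
    (hr_div : ¬ IntegrableOn r (Ici (0 : ℝ)))
    (hμ_prob : ∀ t : ℝ, 0 ≤ t → IsProbabilityMeasure (μ t))
    (hμ_supp : ∀ t : ℝ, 0 ≤ t → μ t (Icc (h t) t)ᶜ = 0)
    (hμ_meas : ∀ g : ℝ → ℝ, Measurable g → (∃ C : ℝ, ∀ y : ℝ, |g y| ≤ C) →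
      Measurable (fun t => ∫ s, g s ∂(μ t)))
    (hφ_bdd : ∃ C : ℝ, ∀ t : ℝ, t ≤ 0 → |φ t| ≤ C)
    (hφ_nonneg : ∀ t : ℝ, t ≤ 0 → 0 ≤ φ t)
    (hφ_pos : 0 < φ 0)
    (x : ℝ → ℝ)
    (hx_cont : Continuous x)
    (hx_init : ∀ t : ℝ, t ≤ 0 → x t = φ t)
    (hx_sol : ∀ t : ℝ, 0 ≤ t →
      x t = φ 0 + ∫ u in (0:ℝ)..t, r u * ((∫ s, f (x s) ∂(μ u)) - x u))
    (hnonosc : ∃ τ : ℝ, 0 < τ ∧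
      ((∀ t : ℝ, τ ≤ t → K < x t) ∨ (∀ t : ℝ, τ ≤ t → x t < K))) :
    Tendsto x atTop (nhds K) := by
  have hx₀ : IsBounded (x '' Iic 0) := by
    obtain ⟨C, hC⟩ := hφ_bdd
    refine isBounded_iff_forall_norm_le.2 ⟨C, ?_⟩
    rintro _ ⟨t, ht, rfl⟩
    exact hx_init t ht ▸ hC t ht
  set F : ℝ → ℝ := fun u => ∫ s, f (x s) ∂(μ u)
  have hs : RelaxesToward r F x 0 := .of_delay hf_cont hx_cont hx₀ hr_meas hr_nonneg hr_bdd
    hμ_prob hμ_supp hμ_meas hx_sol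
  have hdiv := tendsto_intervalIntegral_atTop_of_not_integrableOn hr_nonneg
    hs.rate_intervalIntegrable hr_div
  have hW' : WindowDominated h (fun y => -f (-y)) (-x) (-F) 0 := by
    convert windowDominated_integral (g := fun y => -f (-y)) (y := -x) hμ_prob hμ_supp
      (by fun_prop) using 1
    ext u
    simp [F, integral_neg]
  have hfK : f K = K := hf_cont.continuousAt.eq_of_lt_of_gt
    (mem_of_superset (Ioo_mem_nhdsLT hK) fun y hy => hf_below y hy.1 hy.2)
    (mem_of_superset self_mem_nhdsWithin fun y hy => (hf_above y hy).2)
  obtain ⟨τ, hτ, hup | hdown⟩ := hnonosc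
  · exact hs.tendsto_of_forall_gt hdiv hh_tend
      (windowDominated_integral hμ_prob hμ_supp (hf_cont.comp hx_cont)) hf_cont hfK.le hup
      fun t _ y hy => (hf_above y hy.1).2
  have hpos : ∀ t, 0 ≤ t → 0 < x t := fun t => hs.pos (hx_init 0 le_rfl ▸ hφ_pos)
    fun v hv hxv => neg_nonpos.1 <| hW' v hv 0 fun s hs => by
      have hxs : 0 ≤ x s := (le_total s 0).elim (fun hs0 => hx_init s hs0 ▸ hφ_nonneg s hs0)
        fun hs0 => hxv s ⟨hs0, hs.2⟩
      simpa using hf_nonneg _ hxs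
  have hneg := hs.neg.tendsto_of_forall_gt (K := -K) hdiv hh_tend hW' (by fun_prop)
    (by simp [hfK]) (fun t ht => neg_lt_neg (hdown t ht)) fun t ht y hy => by
      have hfy := hf_below (-y) ((hpos t (hτ.le.trans ht)).trans_le (le_neg.1 hy.2))
        (neg_lt.1 hy.1)
      linarith
  simpa using hneg.neg

theorem distributed_delay_nonoscillatory_convergence
    (f : ℝ → ℝ) (L K : ℝ) (hL : 0 ≤ L) (hK : 0 < K)
    (h r : ℝ → ℝ) (μ : ℝ → Measure ℝ) (φ : ℝ → ℝ)
    (hf_cont : Continuous f)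
    (hf_nonneg : ∀ y : ℝ, 0 ≤ y → 0 ≤ f y)
    (hf_lip : ∀ u v : ℝ, 0 ≤ u → 0 ≤ v → |f u - f v| ≤ L * |u - v|)
    (hf_zero : f 0 = 0)
    (hf_below : ∀ y : ℝ, 0 < y → y < K → y < f y)
    (hf_above : ∀ y : ℝ, K < y → 0 < f y ∧ f y < y)
    (hh_meas : Measurable h)
    (hh_le : ∀ t : ℝ, 0 ≤ t → h t ≤ t)
    (hh_tend : Tendsto h atTop atTop)
    (hr_meas : Measurable r)
    (hr_nonneg : ∀ t : ℝ, 0 ≤ r t)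
    (hr_bdd : ∃ C : ℝ, ∀ᵐ t ∂volume, r t ≤ C)
    (hr_div : ¬ IntegrableOn r (Ici (0 : ℝ)))
    (hμ_prob : ∀ t : ℝ, 0 ≤ t → IsProbabilityMeasure (μ t))
    (hμ_supp : ∀ t : ℝ, 0 ≤ t → μ t (Icc (h t) t)ᶜ = 0)
    (hμ_meas : ∀ g : ℝ → ℝ, Measurable g → (∃ C : ℝ, ∀ y : ℝ, |g y| ≤ C) →
      Measurable (fun t => ∫ s, g s ∂(μ t)))
    (hφ_cont : ContinuousOn φ (Iic (0 : ℝ)))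
    (hφ_bdd : ∃ C : ℝ, ∀ t : ℝ, t ≤ 0 → |φ t| ≤ C)
    (hφ_nonneg : ∀ t : ℝ, t ≤ 0 → 0 ≤ φ t)
    (hφ_pos : 0 < φ 0)
    (x : ℝ → ℝ)
    (hx_cont : Continuous x)
    (hx_init : ∀ t : ℝ, t ≤ 0 → x t = φ t)
    (hx_sol : ∀ t : ℝ, 0 ≤ t →
      x t = φ 0 + ∫ u in (0:ℝ)..t, r u * ((∫ s, f (x s) ∂(μ u)) - x u))
    (hnonosc : ∃ τ : ℝ, 0 < τ ∧
      ((∀ t : ℝ, τ ≤ t → K < x t) ∨ (∀ t : ℝ, τ ≤ t → x t < K))) :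
    Tendsto x atTop (nhds K) :=
  distributed_delay_nonoscillatory_convergence_general f K hK h r μ φ hf_cont hf_nonneg hf_below
    hf_above hh_tend hr_meas hr_nonneg hr_bdd hr_div hμ_prob hμ_supp hμ_meas hφ_bdd hφ_nonneg hφ_pos
    x hx_cont hx_init hx_sol hnonosc
end

section
/- Under hypotheses (a1)–(a5), if in addition f(x) < K for every x with 0 < x < K, then every solution x of the initial value problem for the distributed-delay equation satisfies lim_{t→∞} x(t) = K. -/
open MeasureTheory Filter Set Topology

/-!
Write `F u = ∫ f (x s) dμ_u`, so that `x' = r (F - x)` and `F u` is an average of `f ∘ x` over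
the window `[h u, u]`. Where `F ≤ c`, `x` cannot rise above `max (x a) c` (look at the last time
`x` meets that level); applied up to a first hitting time, this gives barriers that `x` cannot
cross, hence a global upper bound and a positive lower bound for large times (positivity itself
comes from `x' ≥ -r x`). Since `∫ r = ∞`, once `F ≤ c` for all large times, `x` ends up below
every `c' > c` (and symmetrically). For `M > K`, `f` maps `[0, M]` strictly below `M`, and for
`0 < ℓ < K` it maps `[ℓ, K]` strictly above `ℓ`; these margins persist on a neighbourhood of the
interval, so `limsup x > K` or `liminf x < K` would be pushed strictly inward. Hence `x → K`.
-/

lemma Icc_subset_thickening_Icc {a b δ : ℝ} (hab : a ≤ b) (hδ : 0 < δ) :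
    Icc (a - δ / 2) (b + δ / 2) ⊆ Metric.thickening δ (Icc a b) := by
  intro y hy
  rw [Metric.mem_thickening_iff]
  refine ⟨max a (min y b), ⟨le_max_left _ _, max_le hab (min_le_right _ _)⟩, ?_⟩
  rw [Real.dist_eq, abs_lt]
  constructor <;> cases le_total y b <;> cases le_total a (min y b) <;>
    simp_all only [min_eq_left, min_eq_right, max_eq_left, max_eq_right] <;> linarith [hy.1, hy.2]

lemma Continuous.exists_forall_lt_of_forall_lt_Icc {f : ℝ → ℝ} (hf : Continuous f) {a b c : ℝ}
    (hab : a ≤ b) (h : ∀ y ∈ Icc a b, f y < c) :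
    ∃ δ > 0, ∃ c' < c, ∀ y ∈ Icc (a - δ) (b + δ), f y < c' := by
  obtain ⟨y₀, hy₀, hmax⟩ :=
    isCompact_Icc.exists_isMaxOn (nonempty_Icc.2 hab) hf.continuousOn
  have hy₀c := h y₀ hy₀
  obtain ⟨δ, hδ, hsub⟩ := isCompact_Icc.exists_thickening_subset_open
    (isOpen_lt hf continuous_const) fun y hy =>
      show f y < (f y₀ + c) / 2 by linarith [show f y ≤ f y₀ from hmax hy]
  exact ⟨δ / 2, half_pos hδ, (f y₀ + c) / 2, by linarith, fun y hy =>
    hsub (Icc_subset_thickening_Icc hab hδ hy)⟩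

lemma Continuous.exists_forall_gt_of_forall_gt_Icc {f : ℝ → ℝ} (hf : Continuous f) {a b c : ℝ}
    (hab : a ≤ b) (h : ∀ y ∈ Icc a b, c < f y) :
    ∃ δ > 0, ∃ c' > c, ∀ y ∈ Icc (a - δ) (b + δ), c' < f y := by
  obtain ⟨δ, hδ, c', hc', hlt⟩ :=
    hf.neg.exists_forall_lt_of_forall_lt_Icc (c := -c) hab fun y hy => neg_lt_neg (h y hy)
  exact ⟨δ, hδ, -c', lt_neg_of_lt_neg hc', fun y hy => neg_lt.1 (hlt y hy)⟩

lemma Continuous.exists_first_eq {x : ℝ → ℝ} (hx : Continuous x) {a t P : ℝ} (hat : a ≤ t)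
    (ha : x a < P) (ht : P ≤ x t) : ∃ τ ∈ Icc a t, x τ = P ∧ ∀ s ∈ Ico a τ, x s < P := by
  have hhit : ∀ s ∈ Icc a t, P ≤ x s → ∃ τ ∈ Icc a t ∩ x ⁻¹' {P}, τ ≤ s := fun s hs hPs => by
    obtain ⟨τ, hτ, hxτ⟩ := intermediate_value_Icc hs.1 hx.continuousOn ⟨ha.le, hPs⟩
    exact ⟨τ, ⟨⟨hτ.1, hτ.2.trans hs.2⟩, hxτ⟩, hτ.2⟩
  obtain ⟨τ₀, hτ₀, -⟩ := hhit t (right_mem_Icc.2 hat) ht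
  have hbdd : BddBelow (Icc a t ∩ x ⁻¹' {P}) := bddBelow_Icc.mono inter_subset_left
  have hmem :=
    (isClosed_Icc.inter (isClosed_singleton.preimage hx)).csInf_mem ⟨τ₀, hτ₀⟩ hbdd
  refine ⟨_, hmem.1, hmem.2, fun s hs => lt_of_not_ge fun hPs => ?_⟩
  obtain ⟨τ, hτ, hτs⟩ := hhit s ⟨hs.1, hs.2.le.trans hmem.1.2⟩ hPs
  exact (hs.2.trans_le ((csInf_le hbdd hτ).trans hτs)).false

lemma Continuous.exists_last_eq {x : ℝ → ℝ} (hx : Continuous x) {a b P : ℝ} (hab : a ≤ b)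
    (ha : x a ≤ P) (hb : P ≤ x b) : ∃ t ∈ Icc a b, x t = P ∧ ∀ u ∈ Icc t b, P ≤ x u := by
  have hhit : ∀ u ∈ Icc a b, x u ≤ P → ∃ s ∈ Icc a b ∩ x ⁻¹' {P}, u ≤ s := fun u hu hxu => by
    obtain ⟨s, hs, hxs⟩ := intermediate_value_Icc hu.2 hx.continuousOn ⟨hxu, hb⟩
    exact ⟨s, ⟨⟨hu.1.trans hs.1, hs.2⟩, hxs⟩, hs.1⟩
  obtain ⟨s₀, hs₀, -⟩ := hhit a (left_mem_Icc.2 hab) ha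
  have hbdd : BddAbove (Icc a b ∩ x ⁻¹' {P}) := bddAbove_Icc.mono inter_subset_left
  have hmem :=
    (isClosed_Icc.inter (isClosed_singleton.preimage hx)).csSup_mem ⟨s₀, hs₀⟩ hbdd
  refine ⟨_, hmem.1, hmem.2, fun u hu => le_of_not_gt fun hxu => ?_⟩
  obtain ⟨s, hs, hus⟩ := hhit u ⟨hmem.1.1.trans hu.1, hu.2⟩ hxu.le
  have hu_eq : u = sSup (Icc a b ∩ x ⁻¹' {P}) :=
    le_antisymm (hus.trans (le_csSup hbdd hs)) hu.1
  exact hxu.ne (hu_eq ▸ hmem.2)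

/-- `x` solves `x' = r (F - x)` on `[0, ∞)`. -/
structure IsRelaxation (r F x : ℝ → ℝ) : Prop where
  continuous : Continuous x
  rate_nonneg : ∀ u, 0 ≤ r u
  intervalIntegrable_rate : ∀ a b, IntervalIntegrable r volume a b
  intervalIntegrable : ∀ a b, 0 ≤ a → 0 ≤ b →
    IntervalIntegrable (fun u => r u * (F u - x u)) volume a b
  sub_eq : ∀ a b, 0 ≤ a → a ≤ b → x b - x a = ∫ u in a..b, r u * (F u - x u)

namespace IsRelaxation

variable {r F x : ℝ → ℝ}

protected lemma neg (hx : IsRelaxation r F x) : IsRelaxation r (fun u => -F u) (fun u => -x u) where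
  continuous := hx.continuous.neg
  rate_nonneg := hx.rate_nonneg
  intervalIntegrable_rate := hx.intervalIntegrable_rate
  intervalIntegrable a b ha hb := by
    convert (hx.intervalIntegrable a b ha hb).neg using 1
    ext u
    simp only [Pi.neg_apply]
    ring
  sub_eq a b ha hab := by
    simp only [neg_sub_neg, ← neg_sub (F _), mul_neg, intervalIntegral.integral_neg,
      ← hx.sub_eq a b ha hab]
    ring

lemma sub_le_mul_integral (hx : IsRelaxation r F x) {a b D : ℝ} (ha : 0 ≤ a) (hab : a ≤ b)
    (hD : ∀ u ∈ Icc a b, F u - x u ≤ D) : x b - x a ≤ D * ∫ u in a..b, r u := by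
  rw [hx.sub_eq a b ha hab, ← intervalIntegral.integral_const_mul]
  refine intervalIntegral.integral_mono_on hab (hx.intervalIntegrable a b ha (ha.trans hab))
    ((hx.intervalIntegrable_rate a b).const_mul D) fun u hu => ?_
  rw [mul_comm D]
  exact mul_le_mul_of_nonneg_left (hD u hu) (hx.rate_nonneg u)

lemma mul_integral_le_sub (hx : IsRelaxation r F x) {a b D : ℝ} (ha : 0 ≤ a) (hab : a ≤ b)
    (hD : ∀ u ∈ Icc a b, D ≤ F u - x u) : D * ∫ u in a..b, r u ≤ x b - x a := by
  have := hx.neg.sub_le_mul_integral ha hab (D := -D) fun u hu => by linarith [hD u hu]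
  linarith [neg_mul D (∫ u in a..b, r u)]

lemma le_max_of_forall_le (hx : IsRelaxation r F x) {a b c : ℝ} (ha : 0 ≤ a) (hab : a ≤ b)
    (hF : ∀ u ∈ Icc a b, F u ≤ c) : x b ≤ max (x a) c := by
  by_contra! hlt
  obtain ⟨t, ht, hxt, hge⟩ := hx.continuous.exists_last_eq hab (le_max_left _ _) hlt.le
  have := hx.sub_le_mul_integral (ha.trans ht.1) ht.2 (D := 0) fun u hu => by
    linarith [hF u ⟨ht.1.trans hu.1, hu.2⟩, hge u hu, le_max_right (x a) c]
  linarith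

lemma lt_of_barrier (hx : IsRelaxation r F x) {a c M : ℝ} (ha : 0 ≤ a) (hcM : c < M)
    (hxa : x a < M) (hF : ∀ u, a ≤ u → (∀ s ∈ Icc a u, x s ≤ M) → F u ≤ c) {t : ℝ}
    (ht : a ≤ t) : x t < M := by
  by_contra! hMt
  obtain ⟨τ, hτ, hxτ, hlt⟩ := hx.continuous.exists_first_eq ht hxa hMt
  have hle : ∀ s ∈ Icc a τ, x s ≤ M := fun s hs =>
    hs.2.eq_or_lt.elim (fun h => (h ▸ hxτ).le) fun h => (hlt s ⟨hs.1, h⟩).le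
  have := hx.le_max_of_forall_le ha hτ.1 fun u hu =>
    hF u hu.1 fun s hs => hle s ⟨hs.1, hs.2.trans hu.2⟩
  exact (max_lt hxa hcM).not_ge (hxτ ▸ this)

lemma gt_of_barrier (hx : IsRelaxation r F x) {a c m : ℝ} (ha : 0 ≤ a) (hmc : m < c)
    (hxa : m < x a) (hF : ∀ u, a ≤ u → (∀ s ∈ Icc a u, m ≤ x s) → c ≤ F u) {t : ℝ}
    (ht : a ≤ t) : m < x t :=
  neg_lt_neg_iff.1 <| hx.neg.lt_of_barrier ha (neg_lt_neg hmc) (neg_lt_neg hxa)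
    (fun u hu hle => neg_le_neg <| hF u hu fun s hs => neg_le_neg_iff.1 (hle s hs)) ht

lemma mul_one_sub_integral_le (hx : IsRelaxation r F x) {a b : ℝ} (ha : 0 ≤ a) (hab : a ≤ b)
    (hF : ∀ u ∈ Icc a b, 0 ≤ F u) (hmax : ∀ u ∈ Icc a b, x u ≤ x a) :
    x a * (1 - ∫ u in a..b, r u) ≤ x b := by
  have := hx.mul_integral_le_sub ha hab (D := -x a) fun u hu => by linarith [hF u hu, hmax u hu]
  linarith [neg_mul (x a) (∫ u in a..b, r u), mul_one_sub (x a) (∫ u in a..b, r u)]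

/-- Here `x' ≥ -r x`: on an interval before a first zero that is short enough for `∫ r < 1`,
`x` keeps a positive fraction of its maximum. -/
lemma pos_of_forall_nonneg (hx : IsRelaxation r F x) {a : ℝ} (ha : 0 ≤ a) (hxa : 0 < x a)
    (hF : ∀ u, a ≤ u → (∀ s ∈ Icc a u, 0 ≤ x s) → 0 ≤ F u) {t : ℝ} (ht : a ≤ t) :
    0 < x t := by
  by_contra! hxt
  obtain ⟨τ, hτ, hxτ, hpos⟩ := hx.continuous.neg.exists_first_eq ht (neg_lt_zero.2 hxa)
    (neg_nonneg.2 hxt)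
  simp only [Pi.neg_apply, neg_eq_zero, neg_lt_zero] at hxτ hpos
  have haτ : a < τ := hτ.1.lt_of_ne fun h => hxa.ne' (h ▸ hxτ)
  have hcont : Continuous fun s => ∫ u in s..τ, r u := by
    refine (intervalIntegral.continuous_primitive hx.intervalIntegrable_rate τ).neg.congr
      fun s => ?_
    simp [intervalIntegral.integral_symm s τ]
  obtain ⟨a', hsmall, ha'⟩ := ((hcont.continuousAt.eventually_lt continuousAt_const
    (by simp : ∫ u in τ..τ, r u < 1)).filter_mono nhdsWithin_le_nhds |>.and
      (Ioo_mem_nhdsLT haτ)).exists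
  obtain ⟨b, hb, hmax⟩ := isCompact_Icc.exists_isMaxOn (nonempty_Icc.2 ha'.2.le)
    hx.continuous.continuousOn
  have hnonneg : ∀ s ∈ Icc a τ, 0 ≤ x s := fun s hs =>
    hs.2.eq_or_lt.elim (fun h => (h ▸ hxτ).ge) fun h => (hpos s ⟨hs.1, h⟩).le
  have hxb : 0 < x b := (hpos a' ⟨ha'.1.le, ha'.2⟩).trans_le (hmax (left_mem_Icc.2 ha'.2.le))
  have hint : ∫ u in b..τ, r u < 1 := (intervalIntegral.integral_mono_interval hb.1 hb.2 le_rfl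
    (ae_of_all _ hx.rate_nonneg) (hx.intervalIntegrable_rate a' τ)).trans_lt hsmall
  have := hx.mul_one_sub_integral_le (ha.trans (ha'.1.le.trans hb.1)) hb.2
    (fun u hu => hF u (ha'.1.le.trans (hb.1.trans hu.1)) fun s hs =>
      hnonneg s ⟨hs.1, hs.2.trans hu.2⟩)
    fun u hu => hmax ⟨hb.1.trans hu.1, hu.2⟩
  exact (mul_pos hxb (sub_pos.2 hint)).not_ge (hxτ ▸ this)

lemma eventually_le_of_eventually_le (hx : IsRelaxation r F x)
    (hr : Tendsto (fun t => ∫ u in (0 : ℝ)..t, r u) atTop atTop) {c c' : ℝ} (hcc' : c < c')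
    (hF : ∀ᶠ u in atTop, F u ≤ c) : ∀ᶠ t in atTop, x t ≤ c' := by
  obtain ⟨T, hT⟩ := eventually_atTop.1 (hF.and (eventually_ge_atTop 0))
  have hT0 : 0 ≤ T := (hT T le_rfl).2
  obtain ⟨t₁, hTt₁, hxt₁⟩ : ∃ t₁, T ≤ t₁ ∧ x t₁ ≤ c' := by
    by_contra! hgt
    obtain ⟨t, ht, hTt⟩ := ((hr.eventually_gt_atTop
      ((∫ u in (0 : ℝ)..T, r u) + (x T - c') / (c' - c))).and (eventually_ge_atTop T)).exists
    have hest := hx.sub_le_mul_integral hT0 hTt (D := c - c') fun u hu => by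
      linarith [(hT u hu.1).1, hgt u hu.1]
    rw [← intervalIntegral.integral_interval_sub_left (hx.intervalIntegrable_rate 0 t)
      (hx.intervalIntegrable_rate 0 T)] at hest
    have hgain :
        x T - c' < (c' - c) * ((∫ u in (0 : ℝ)..t, r u) - ∫ u in (0 : ℝ)..T, r u) := by
      rw [← div_lt_iff₀' (sub_pos.2 hcc')]
      linarith
    linarith [hgt t hTt]
  filter_upwards [eventually_ge_atTop t₁] with t ht
  exact (hx.le_max_of_forall_le (hT0.trans hTt₁) ht fun u hu =>
    (hT u (hTt₁.trans hu.1)).1).trans (max_le hxt₁ hcc'.le)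

lemma eventually_ge_of_eventually_ge (hx : IsRelaxation r F x)
    (hr : Tendsto (fun t => ∫ u in (0 : ℝ)..t, r u) atTop atTop) {c c' : ℝ} (hc'c : c' < c)
    (hF : ∀ᶠ u in atTop, c ≤ F u) : ∀ᶠ t in atTop, c' ≤ x t :=
  (hx.neg.eventually_le_of_eventually_le hr (neg_lt_neg hc'c)
    (hF.mono fun _ => neg_le_neg)).mono fun _ => neg_le_neg_iff.1

end IsRelaxation

structure IsWindowAverage (h g F : ℝ → ℝ) : Prop where
  le : ∀ u c, 0 ≤ u → (∀ s ∈ Icc (h u) u, g s ≤ c) → F u ≤ c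
  ge : ∀ u c, 0 ≤ u → (∀ s ∈ Icc (h u) u, c ≤ g s) → c ≤ F u

namespace IsWindowAverage

variable {h g F : ℝ → ℝ}

lemma eventually_le (hF : IsWindowAverage h g F) (hh : Tendsto h atTop atTop) {c : ℝ}
    (hg : ∀ᶠ s in atTop, g s ≤ c) : ∀ᶠ u in atTop, F u ≤ c := by
  obtain ⟨T, hT⟩ := eventually_atTop.1 hg
  filter_upwards [hh.eventually_ge_atTop T, eventually_ge_atTop 0] with u hu hu0
  exact hF.le u c hu0 fun s hs => hT s (hu.trans hs.1)

lemma eventually_ge (hF : IsWindowAverage h g F) (hh : Tendsto h atTop atTop) {c : ℝ}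
    (hg : ∀ᶠ s in atTop, c ≤ g s) : ∀ᶠ u in atTop, c ≤ F u := by
  obtain ⟨T, hT⟩ := eventually_atTop.1 hg
  filter_upwards [hh.eventually_ge_atTop T, eventually_ge_atTop 0] with u hu hu0
  exact hF.ge u c hu0 fun s hs => hT s (hu.trans hs.1)

end IsWindowAverage

lemma Continuous.integrable_of_ae_mem {α : Type*} [TopologicalSpace α] [MeasurableSpace α]
    [OpensMeasurableSpace α] [T2Space α] {ν : Measure α} [IsFiniteMeasure ν] {g : α → ℝ}
    {S : Set α} (hg : Continuous g) (hS : IsCompact S) (hν : ∀ᵐ y ∂ν, y ∈ S) :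
    Integrable g ν := by
  rw [← Measure.restrict_eq_self_of_ae_mem hν]
  exact hg.continuousOn.integrableOn_compact hS

lemma isWindowAverage_integral {h g : ℝ → ℝ} {μ : ℝ → Measure ℝ} (hg : Continuous g)
    (hμ_prob : ∀ t, 0 ≤ t → IsProbabilityMeasure (μ t))
    (hμ_supp : ∀ t, 0 ≤ t → ∀ᵐ s ∂μ t, s ∈ Icc (h t) t) :
    IsWindowAverage h g fun u => ∫ s, g s ∂μ u where
  le u c hu hc := by
    have := hμ_prob u hu
    calc ∫ s, g s ∂μ u ≤ ∫ _, c ∂μ u := integral_mono_ae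
          (hg.integrable_of_ae_mem isCompact_Icc (hμ_supp u hu)) (integrable_const c)
          ((hμ_supp u hu).mono hc)
      _ = c := by simp
  ge u c hu hc := by
    have := hμ_prob u hu
    calc c = ∫ _, c ∂μ u := by simp
      _ ≤ ∫ s, g s ∂μ u := integral_mono_ae (integrable_const c)
          (hg.integrable_of_ae_mem isCompact_Icc (hμ_supp u hu)) ((hμ_supp u hu).mono hc)

lemma Continuous.exists_abs_comp_le {f x : ℝ → ℝ} (hf : Continuous f) (hx : Continuous x)
    {C : ℝ} (hC : ∀ s ≤ 0, |x s| ≤ C) (b : ℝ) : ∃ D, ∀ s ≤ b, |f (x s)| ≤ D := by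
  obtain ⟨E, hE⟩ :=
    (isCompact_Icc (a := 0) (b := b)).exists_bound_of_continuousOn hx.continuousOn
  have hxR : ∀ s ≤ b, x s ∈ Icc (-max C E) (max C E) := fun s hs => abs_le.1 <| by
    rcases le_total s 0 with hs0 | hs0
    · exact (hC s hs0).trans (le_max_left _ _)
    · exact (hE s ⟨hs0, hs⟩).trans (le_max_right _ _)
  obtain ⟨D, hD⟩ :=
    (isCompact_Icc (a := -max C E) (b := max C E)).exists_bound_of_continuousOn hf.continuousOn
  exact ⟨D, fun s hs => hD _ (hxR s hs)⟩

lemma integrableOn_mul_integral_sub {r g x : ℝ → ℝ} {μ : ℝ → Measure ℝ} {b C D : ℝ}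
    (hr : Measurable r) (hr0 : ∀ t, 0 ≤ r t) (hrC : ∀ᵐ t, r t ≤ C) (hx : Continuous x)
    (hg : Continuous g) (hgD : ∀ s ≤ b, |g s| ≤ D)
    (hμ_prob : ∀ t, 0 ≤ t → IsProbabilityMeasure (μ t))
    (hμ_le : ∀ t, 0 ≤ t → ∀ᵐ s ∂μ t, s ≤ t)
    (hμ_meas : ∀ k : ℝ → ℝ, Measurable k → (∃ C : ℝ, ∀ y : ℝ, |k y| ≤ C) →
      Measurable (fun t => ∫ s, k s ∂(μ t))) :
    IntegrableOn (fun u => r u * ((∫ s, g s ∂μ u) - x u)) (Icc 0 b) := by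
  -- Truncating `g` at `b` makes it bounded, so that `hμ_meas` applies, and does not change
  -- `∫ g ∂(μ u)` for `u ≤ b`.
  set G := fun u => ∫ s, g (min s b) ∂μ u
  have hG : Measurable G := hμ_meas _ (hg.comp (continuous_id.min continuous_const)).measurable
    ⟨D, fun y => hgD _ (min_le_right _ _)⟩
  have hFG : ∀ u ∈ Icc 0 b, ∫ s, g s ∂μ u = G u := fun u hu =>
    integral_congr_ae <| (hμ_le u hu.1).mono fun s hs => by simp [min_eq_left (hs.trans hu.2)]
  have hGD : ∀ u ∈ Icc 0 b, |G u| ≤ D := fun u hu => by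
    have := hμ_prob u hu.1
    simpa using norm_integral_le_of_norm_le_const (μ := μ u) (f := fun s => g (min s b))
      (ae_of_all _ fun s => hgD (min s b) (min_le_right _ _))
  obtain ⟨E, hE⟩ :=
    (isCompact_Icc (a := 0) (b := b)).exists_bound_of_continuousOn hx.continuousOn
  refine IntegrableOn.congr_fun (f := fun u => r u * (G u - x u)) ?_
    (fun u hu => by dsimp only; rw [hFG u hu]) measurableSet_Icc
  refine Measure.integrableOn_of_bounded (M := C * (D + E)) (by simp)
    (hr.mul (hG.sub hx.measurable)).aestronglyMeasurable ?_
  filter_upwards [ae_restrict_of_ae hrC, ae_restrict_mem measurableSet_Icc] with u hru hu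
  have hGx : |G u - x u| ≤ D + E := (abs_sub _ _).trans (add_le_add (hGD u hu) (hE u hu))
  rw [norm_mul, Real.norm_eq_abs, Real.norm_eq_abs, abs_of_nonneg (hr0 u)]
  exact mul_le_mul hru hGx (abs_nonneg _) ((hr0 u).trans hru)

lemma isRelaxation_integral {r g x : ℝ → ℝ} {μ : ℝ → Measure ℝ} {C x₀ : ℝ}
    (hr : Measurable r) (hr0 : ∀ t, 0 ≤ r t) (hrC : ∀ᵐ t, r t ≤ C) (hx : Continuous x)
    (hg : Continuous g) (hgD : ∀ b, ∃ D, ∀ s ≤ b, |g s| ≤ D)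
    (hμ_prob : ∀ t, 0 ≤ t → IsProbabilityMeasure (μ t))
    (hμ_le : ∀ t, 0 ≤ t → ∀ᵐ s ∂μ t, s ≤ t)
    (hμ_meas : ∀ k : ℝ → ℝ, Measurable k → (∃ C : ℝ, ∀ y : ℝ, |k y| ≤ C) →
      Measurable (fun t => ∫ s, k s ∂(μ t)))
    (hsol : ∀ t, 0 ≤ t → x t = x₀ + ∫ u in (0 : ℝ)..t, r u * ((∫ s, g s ∂μ u) - x u)) :
    IsRelaxation r (fun u => ∫ s, g s ∂μ u) x := by
  have hint : ∀ b, 0 ≤ b →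
      IntegrableOn (fun u => r u * ((∫ s, g s ∂μ u) - x u)) (Icc 0 b) :=
    fun b _ => (hgD b).elim fun D hD =>
      integrableOn_mul_integral_sub hr hr0 hrC hx hg hD hμ_prob hμ_le hμ_meas
  have hintI : ∀ a b, 0 ≤ a → 0 ≤ b →
      IntervalIntegrable (fun u => r u * ((∫ s, g s ∂μ u) - x u)) volume a b := by
    intro a b ha hb
    wlog hab : a ≤ b generalizing a b
    · exact (this b a hb ha (le_of_not_ge hab)).symm
    rw [intervalIntegrable_iff_integrableOn_Ioc_of_le hab]
    exact (hint b hb).mono_set (Ioc_subset_Icc_self.trans (Icc_subset_Icc_left ha))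
  refine ⟨hx, hr0, fun a b => ?_, hintI, fun a b ha hab => ?_⟩
  · refine intervalIntegrable_const.mono_fun' (g := fun _ => C) hr.aestronglyMeasurable ?_
    exact ae_restrict_of_ae <| hrC.mono fun t ht =>
      show ‖r t‖ ≤ C by rwa [Real.norm_of_nonneg (hr0 t)]
  · rw [hsol b (ha.trans hab), hsol a ha, add_sub_add_left_eq_sub,
      intervalIntegral.integral_interval_sub_left (hintI 0 b le_rfl (ha.trans hab))
        (hintI 0 a le_rfl ha)]

lemma tendsto_integral_atTop_of_not_integrableOn {r : ℝ → ℝ} (hr0 : ∀ t, 0 ≤ r t)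
    (hri : ∀ a b, IntervalIntegrable r volume a b) {a : ℝ} (hr : ¬ IntegrableOn r (Ici a)) :
    Tendsto (fun t => ∫ u in a..t, r u) atTop atTop := by
  refine Monotone.tendsto_atTop_atTop (fun s t hst => ?_) fun M => ?_
  · rw [← sub_nonneg, intervalIntegral.integral_interval_sub_left (hri a t) (hri a s)]
    exact intervalIntegral.integral_nonneg hst fun u _ => hr0 u
  · by_contra! hM
    refine hr ((integrableOn_Ici_iff_integrableOn_Ioi (by simp)).2 <|
      integrableOn_Ioi_of_intervalIntegral_norm_bounded M a (fun i => (hri a i).1) tendsto_id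
        (eventually_ge_atTop a |>.mono fun i hi => ?_))
    simpa only [Real.norm_of_nonneg (hr0 _)] using (hM i).le

lemma Continuous.apply_eq_self_of_crossing {f : ℝ → ℝ} (hf : Continuous f) {K : ℝ}
    (hK : 0 < K) (hf_below : ∀ y, 0 < y → y < K → y < f y) (hf_above : ∀ y, K < y → f y < y) :
    f K = K := by
  refine le_antisymm ?_ ?_
  · have := closure_minimal (s := Ioi K) (fun y hy => (hf_above y hy).le)
      (isClosed_le hf continuous_id)
    exact this (closure_Ioi K ▸ self_mem_Ici)
  · have := closure_minimal (s := Ioo 0 K) (fun y hy => (hf_below y hy.1 hy.2).le)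
      (isClosed_le continuous_id hf)
    exact this (closure_Ioo hK.ne ▸ right_mem_Icc.2 hK.le)

lemma apply_lt_of_mem_Icc {f : ℝ → ℝ} {K M : ℝ} (hK : 0 ≤ K) (hf0 : f 0 = 0)
    (hfK : f K = K) (hf_lt_K : ∀ y, 0 < y → y < K → f y < K)
    (hf_above : ∀ y, K < y → f y < y) (hKM : K < M) : ∀ y ∈ Icc 0 M, f y < M := by
  rintro y ⟨hy0, hyM⟩
  rcases hy0.eq_or_lt with rfl | hy0
  · linarith
  rcases lt_trichotomy y K with hyK | rfl | hyK
  · linarith [hf_lt_K y hy0 hyK]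
  · linarith
  · linarith [hf_above y hyK]

lemma exists_pos_forall_lt_apply {f : ℝ → ℝ} (hf : Continuous f) {K : ℝ} (hK : 0 < K)
    (hfK : f K = K) (hf_below : ∀ y, 0 < y → y < K → y < f y)
    (hf_above : ∀ y, K < y → 0 < f y) (B : ℝ) :
    ∃ m₀ > 0, ∀ m, 0 < m → m ≤ m₀ → ∀ y ∈ Icc m B, m < f y := by
  have hfpos : ∀ y ∈ Icc K (max B K), 0 < f y := fun y hy =>
    hy.1.eq_or_lt.elim (fun h => h ▸ hfK.symm ▸ hK) (hf_above y)
  obtain ⟨δ, hδ, p, hp, hfp⟩ := hf.exists_forall_gt_of_forall_gt_Icc (le_max_right B K) hfpos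
  refine ⟨min p K / 2, by positivity, fun m hm hmm₀ y hy => ?_⟩
  rcases lt_or_ge y K with hyK | hyK
  · exact hy.1.trans_lt (hf_below y (hm.trans_le hy.1) hyK)
  · have hmp : m < p := by linarith [min_le_left p K]
    exact hmp.trans (hfp y ⟨by linarith, by linarith [hy.2, le_max_left B K]⟩)

section Dynamics

variable {r h f x F : ℝ → ℝ}

lemma IsRelaxation.pos_of_window (hx : IsRelaxation r F x)
    (hF : IsWindowAverage h (fun s => f (x s)) F) (hf : ∀ y, 0 ≤ y → 0 ≤ f y)
    (hx_neg : ∀ s ≤ 0, 0 ≤ x s) (hx0 : 0 < x 0) {t : ℝ} (ht : 0 ≤ t) : 0 < x t :=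
  hx.pos_of_forall_nonneg le_rfl hx0 (fun u hu hxu => hF.ge u 0 hu fun s hs =>
    hf _ <| (le_total s 0).elim (hx_neg s) fun hs0 => hxu s ⟨hs0, hs.2⟩) ht

lemma IsRelaxation.exists_forall_le_of_window (hx : IsRelaxation r F x)
    (hF : IsWindowAverage h (fun s => f (x s)) F) (hf : Continuous f) {K C : ℝ}
    (hf_lt : ∀ M, K < M → ∀ y ∈ Icc 0 M, f y < M) (hx0 : ∀ t, 0 ≤ x t)
    (hC : ∀ s ≤ 0, x s ≤ C) : ∃ B, ∀ t, x t ≤ B := by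
  set M := max K C + 1
  have hCM : C < M := by linarith [le_max_right K C]
  obtain ⟨δ, hδ, c, hcM, hfc⟩ := hf.exists_forall_lt_of_forall_lt_Icc
    (by linarith [hx0 0, hC 0 le_rfl]) (hf_lt M (by linarith [le_max_left K C]))
  refine ⟨M, fun t => (le_total t 0).elim (fun ht => (hC t ht).trans hCM.le) fun ht => ?_⟩
  refine (hx.lt_of_barrier le_rfl hcM ((hC 0 le_rfl).trans_lt hCM) (fun u hu hxu => ?_) ht).le
  refine hF.le u c hu fun s hs => (hfc _ ⟨by linarith [hx0 s], ?_⟩).le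
  rcases le_total s 0 with hs0 | hs0
  · linarith [hC s hs0]
  · linarith [hxu s ⟨hs0, hs.2⟩]

lemma IsRelaxation.exists_pos_eventually_le_of_window (hx : IsRelaxation r F x)
    (hF : IsWindowAverage h (fun s => f (x s)) F) (hh : Tendsto h atTop atTop) {B m₀ : ℝ}
    (hm₀ : 0 < m₀) (hf : ∀ m, 0 < m → m ≤ m₀ → ∀ y ∈ Icc m B, m < f y)
    (hf_cont : Continuous f) (hpos : ∀ t, 0 ≤ t → 0 < x t) (hB : ∀ t, x t ≤ B) :
    ∃ m > 0, ∀ᶠ t in atTop, m ≤ x t := by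
  obtain ⟨T, hT⟩ := eventually_atTop.1 (hh.eventually_ge_atTop 0)
  set T₀ := max T 0
  have hT₀ : 0 ≤ T₀ := le_max_right _ _
  obtain ⟨t₀, ht₀, hmin⟩ := isCompact_Icc.exists_isMinOn (nonempty_Icc.2 hT₀)
    (hx.continuous.continuousOn (s := Icc 0 T₀))
  have hq := hpos t₀ ht₀.1
  set m := min m₀ (x t₀) / 2 with hm_def
  have hm : 0 < m := by positivity
  have hmq : m < x t₀ := by linarith [min_le_right m₀ (x t₀)]
  obtain ⟨δ, hδ, c, hc, hfc⟩ := hf_cont.exists_forall_gt_of_forall_gt_Icc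
    (by linarith [hB t₀]) (hf m hm (by linarith [min_le_left m₀ (x t₀)]))
  refine ⟨m, hm, eventually_atTop.2 ⟨T₀, fun t ht => (hx.gt_of_barrier hT₀ hc
    (hmq.trans_le (hmin ⟨hT₀, le_rfl⟩)) (fun u hu hxu => ?_) ht).le⟩⟩
  refine hF.ge u c (hT₀.trans hu) fun s hs => (hfc _ ⟨?_, by linarith [hB s]⟩).le
  have hs0 : 0 ≤ s := (hT u ((le_max_left T 0).trans hu)).trans hs.1
  rcases le_total s T₀ with hsT | hsT
  · linarith [show x t₀ ≤ x s from hmin ⟨hs0, hsT⟩]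
  · linarith [hxu s ⟨hsT, hs.2⟩]

lemma IsRelaxation.limsup_le_of_window (hx : IsRelaxation r F x)
    (hF : IsWindowAverage h (fun s => f (x s)) F) (hh : Tendsto h atTop atTop)
    (hr : Tendsto (fun t => ∫ u in (0 : ℝ)..t, r u) atTop atTop) (hf : Continuous f) {K B : ℝ}
    (hK : 0 ≤ K) (hf_lt : ∀ M, K < M → ∀ y ∈ Icc 0 M, f y < M) (hx0 : ∀ t, 0 ≤ x t)
    (hB : ∀ t, x t ≤ B) : limsup x atTop ≤ K := by
  by_contra! hΛ
  obtain ⟨δ, hδ, c, hc, hfc⟩ :=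
    hf.exists_forall_lt_of_forall_lt_Icc (hK.trans hΛ.le) (hf_lt _ hΛ)
  have hxΛ : ∀ᶠ t in atTop, x t < limsup x atTop + δ :=
    eventually_lt_of_limsup_lt (by linarith) (isBoundedUnder_of ⟨B, hB⟩)
  have hFc :=
    hF.eventually_le hh (hxΛ.mono fun s hs => (hfc _ ⟨by linarith [hx0 s], hs.le⟩).le)
  have := limsup_le_of_le (isCoboundedUnder_le_of_eventually_le atTop (.of_forall hx0))
    (hx.eventually_le_of_eventually_le hr (c' := (c + limsup x atTop) / 2) (by linarith) hFc)
  linarith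

lemma IsRelaxation.le_liminf_of_window (hx : IsRelaxation r F x)
    (hF : IsWindowAverage h (fun s => f (x s)) F) (hh : Tendsto h atTop atTop)
    (hr : Tendsto (fun t => ∫ u in (0 : ℝ)..t, r u) atTop atTop) (hf : Continuous f)
    {K B m : ℝ} (hfK : f K = K) (hf_below : ∀ y, 0 < y → y < K → y < f y) (hB : ∀ t, x t ≤ B)
    (hm : 0 < m) (hmx : ∀ᶠ t in atTop, m ≤ x t) (hsup : limsup x atTop ≤ K) :
    K ≤ liminf x atTop := by
  have hcobdd := isCoboundedUnder_ge_of_eventually_le atTop (Eventually.of_forall hB)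
  by_contra! hℓ
  have hmℓ : m ≤ liminf x atTop := le_liminf_of_le hcobdd hmx
  have hfℓ : ∀ y ∈ Icc (liminf x atTop) K, liminf x atTop < f y := fun y hy =>
    hy.2.eq_or_lt.elim (fun h => h ▸ hfK.symm ▸ hℓ) fun h =>
      hy.1.trans_lt (hf_below y (by linarith [hy.1]) h)
  obtain ⟨δ, hδ, c, hc, hfc⟩ := hf.exists_forall_gt_of_forall_gt_Icc hℓ.le hfℓ
  have hlo : ∀ᶠ t in atTop, liminf x atTop - δ < x t :=
    eventually_lt_of_lt_liminf (by linarith) (isBoundedUnder_of_eventually_ge hmx)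
  have hhi : ∀ᶠ t in atTop, x t < K + δ :=
    eventually_lt_of_limsup_lt (by linarith) (isBoundedUnder_of ⟨B, hB⟩)
  have hFc :=
    hF.eventually_ge hh ((hlo.and hhi).mono fun s hs => (hfc _ ⟨hs.1.le, hs.2.le⟩).le)
  have := le_liminf_of_le hcobdd
    (hx.eventually_ge_of_eventually_ge hr (c' := (c + liminf x atTop) / 2) (by linarith) hFc)
  linarith

end Dynamics

theorem distributed_delay_stability_f_below_K_general
    (f : ℝ → ℝ) (K : ℝ) (hK : 0 < K)
    (h r : ℝ → ℝ) (μ : ℝ → Measure ℝ) (φ : ℝ → ℝ)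
    (hf_cont : Continuous f)
    (hf_nonneg : ∀ y : ℝ, 0 ≤ y → 0 ≤ f y)
    (hf_zero : f 0 = 0)
    (hf_below : ∀ y : ℝ, 0 < y → y < K → y < f y)
    (hf_above : ∀ y : ℝ, K < y → 0 < f y ∧ f y < y)
    (hh_tend : Tendsto h atTop atTop)
    (hr_meas : Measurable r)
    (hr_nonneg : ∀ t : ℝ, 0 ≤ r t)
    (hr_bdd : ∃ C : ℝ, ∀ᵐ t ∂volume, r t ≤ C)
    (hr_div : ¬ IntegrableOn r (Ici (0 : ℝ)))
    (hμ_prob : ∀ t : ℝ, 0 ≤ t → IsProbabilityMeasure (μ t))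
    (hμ_supp : ∀ t : ℝ, 0 ≤ t → μ t (Icc (h t) t)ᶜ = 0)
    (hμ_meas : ∀ g : ℝ → ℝ, Measurable g → (∃ C : ℝ, ∀ y : ℝ, |g y| ≤ C) →
      Measurable (fun t => ∫ s, g s ∂(μ t)))
    (hφ_bdd : ∃ C : ℝ, ∀ t : ℝ, t ≤ 0 → |φ t| ≤ C)
    (hφ_nonneg : ∀ t : ℝ, t ≤ 0 → 0 ≤ φ t)
    (hφ_pos : 0 < φ 0)
    (hfK : ∀ y : ℝ, 0 < y → y < K → f y < K)
    (x : ℝ → ℝ)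
    (hx_cont : Continuous x)
    (hx_init : ∀ t : ℝ, t ≤ 0 → x t = φ t)
    (hx_sol : ∀ t : ℝ, 0 ≤ t →
      x t = φ 0 + ∫ u in (0:ℝ)..t, r u * ((∫ s, f (x s) ∂(μ u)) - x u))
    :
    Tendsto x atTop (nhds K) := by
  obtain ⟨C, hrC⟩ := hr_bdd
  obtain ⟨Cφ, hCφ⟩ := hφ_bdd
  have hxφ : ∀ s ≤ 0, |x s| ≤ Cφ := fun s hs => hx_init s hs ▸ hCφ s hs
  have hx_neg : ∀ s ≤ 0, 0 ≤ x s := fun s hs => hx_init s hs ▸ hφ_nonneg s hs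
  have hμ_ae : ∀ t, 0 ≤ t → ∀ᵐ s ∂μ t, s ∈ Icc (h t) t := fun t ht =>
    ae_iff.2 (hμ_supp t ht)
  have hx : IsRelaxation r (fun u => ∫ s, f (x s) ∂μ u) x :=
    isRelaxation_integral hr_meas hr_nonneg hrC hx_cont (hf_cont.comp hx_cont)
      (hf_cont.exists_abs_comp_le hx_cont hxφ) hμ_prob
      (fun t ht => (hμ_ae t ht).mono fun _ hs => hs.2) hμ_meas hx_sol
  have hF := isWindowAverage_integral (hf_cont.comp hx_cont) hμ_prob hμ_ae
  have hr := tendsto_integral_atTop_of_not_integrableOn hr_nonneg hx.intervalIntegrable_rate hr_div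
  have hf_fix := hf_cont.apply_eq_self_of_crossing hK hf_below fun y hy => (hf_above y hy).2
  have hf_lt := fun M => apply_lt_of_mem_Icc (M := M) hK.le hf_zero hf_fix hfK
    fun y hy => (hf_above y hy).2
  have hpos := fun t => hx.pos_of_window hF hf_nonneg hx_neg (hx_init 0 le_rfl ▸ hφ_pos) (t := t)
  have hx0 : ∀ t, 0 ≤ x t := fun t => (le_total t 0).elim (hx_neg t) fun ht => (hpos t ht).le
  obtain ⟨B, hB⟩ := hx.exists_forall_le_of_window hF hf_cont hf_lt hx0 fun s hs =>
    (le_abs_self _).trans (hxφ s hs)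
  obtain ⟨m₀, hm₀, hf_gt⟩ := exists_pos_forall_lt_apply hf_cont hK hf_fix hf_below
    (fun y hy => (hf_above y hy).1) B
  obtain ⟨m, hm, hmx⟩ :=
    hx.exists_pos_eventually_le_of_window hF hh_tend hm₀ hf_gt hf_cont hpos hB
  have hsup := hx.limsup_le_of_window hF hh_tend hr hf_cont hK.le hf_lt hx0 hB
  exact tendsto_of_le_liminf_of_limsup_le
    (hx.le_liminf_of_window hF hh_tend hr hf_cont hf_fix hf_below hB hm hmx hsup) hsup
    (isBoundedUnder_of ⟨B, hB⟩) (isBoundedUnder_of ⟨0, hx0⟩)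

theorem distributed_delay_stability_f_below_K
    (f : ℝ → ℝ) (L K : ℝ) (hL : 0 ≤ L) (hK : 0 < K)
    (h r : ℝ → ℝ) (μ : ℝ → Measure ℝ) (φ : ℝ → ℝ)
    (hf_cont : Continuous f)
    (hf_nonneg : ∀ y : ℝ, 0 ≤ y → 0 ≤ f y)
    (hf_lip : ∀ u v : ℝ, 0 ≤ u → 0 ≤ v → |f u - f v| ≤ L * |u - v|)
    (hf_zero : f 0 = 0)
    (hf_below : ∀ y : ℝ, 0 < y → y < K → y < f y)
    (hf_above : ∀ y : ℝ, K < y → 0 < f y ∧ f y < y)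
    (hh_meas : Measurable h)
    (hh_le : ∀ t : ℝ, 0 ≤ t → h t ≤ t)
    (hh_tend : Tendsto h atTop atTop)
    (hr_meas : Measurable r)
    (hr_nonneg : ∀ t : ℝ, 0 ≤ r t)
    (hr_bdd : ∃ C : ℝ, ∀ᵐ t ∂volume, r t ≤ C)
    (hr_div : ¬ IntegrableOn r (Ici (0 : ℝ)))
    (hμ_prob : ∀ t : ℝ, 0 ≤ t → IsProbabilityMeasure (μ t))
    (hμ_supp : ∀ t : ℝ, 0 ≤ t → μ t (Icc (h t) t)ᶜ = 0)
    (hμ_meas : ∀ g : ℝ → ℝ, Measurable g → (∃ C : ℝ, ∀ y : ℝ, |g y| ≤ C) →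
      Measurable (fun t => ∫ s, g s ∂(μ t)))
    (hφ_cont : ContinuousOn φ (Iic (0 : ℝ)))
    (hφ_bdd : ∃ C : ℝ, ∀ t : ℝ, t ≤ 0 → |φ t| ≤ C)
    (hφ_nonneg : ∀ t : ℝ, t ≤ 0 → 0 ≤ φ t)
    (hφ_pos : 0 < φ 0)
    (hfK : ∀ y : ℝ, 0 < y → y < K → f y < K)
    (x : ℝ → ℝ)
    (hx_cont : Continuous x)
    (hx_init : ∀ t : ℝ, t ≤ 0 → x t = φ t)
    (hx_sol : ∀ t : ℝ, 0 ≤ t →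
      x t = φ 0 + ∫ u in (0:ℝ)..t, r u * ((∫ s, f (x s) ∂(μ u)) - x u))
    :
    Tendsto x atTop (nhds K) :=
  distributed_delay_stability_f_below_K_general f K hK h r μ φ hf_cont hf_nonneg hf_zero hf_below
    hf_above hh_tend hr_meas hr_nonneg hr_bdd hr_div hμ_prob hμ_supp hμ_meas hφ_bdd hφ_nonneg hφ_pos
    hfK x hx_cont hx_init hx_sol
end
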